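/- arXiv:2504.01808 — 3 statements merged into one kernel-verified Lean document; each statement's English description precedes it below -/
import Mathlib

section
/- Let G be a simple graph of girth at least 5 with no odd hole of length at least 9, let (L_0, …, L_k) be a stable levelling of G, and let H be an induced subgraph of G[L_k]. Then for every z ∈ V(H), χ(H[N_H^2(z)]) ≤ 2. -/
open SimpleGraph

/-- `G` has an induced cycle of length `n` (a hole, when `n ≥ 4`). -/
def SimpleGraph.HasInducedCycle {V : Type*} (G : SimpleGraph V) (n : ℕ) : Prop :=
  ∃ (v : V) (w : G.Walk v v), w.IsCycle ∧ w.length = n ∧ w.toSubgraph.IsInduced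

/-- `(L 0, …, L k)` is a levelling of `G`: disjoint vertex subsets, `L 0` a singleton,
every vertex of `L i` (for `1 ≤ i ≤ k`) has a neighbour in `L (i-1)` and no neighbour
in `L h` for `h ≤ i - 2`. -/
def SimpleGraph.IsLevelling {V : Type*} (G : SimpleGraph V) (L : ℕ → Set V) (k : ℕ) : Prop :=
  (∀ i, i ≤ k → ∀ j, j ≤ k → i ≠ j → Disjoint (L i) (L j)) ∧
  (∃ v₀ : V, L 0 = {v₀}) ∧
  (∀ i, 1 ≤ i → i ≤ k → ∀ v ∈ L i,
    (∃ u ∈ L (i - 1), G.Adj u v) ∧ (∀ h, h + 2 ≤ i → ∀ u ∈ L h, ¬ G.Adj u v))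

/-- A levelling is stable if `L i` is a stable (independent) set for `0 ≤ i ≤ k - 1`. -/
def SimpleGraph.IsStableLevelling {V : Type*} (G : SimpleGraph V) (L : ℕ → Set V) (k : ℕ) :
    Prop :=
  G.IsLevelling L k ∧ ∀ i, i < k → ∀ u ∈ L i, ∀ v ∈ L i, ¬ G.Adj u v

/-!
Suppose the second neighbourhood of `z` in `H` is not bipartite. A shortest odd closed walk in it
is an induced cycle `c` of `G`, of length `5` or `7` since `G` has girth at least `5` and no odd
hole of length at least `9`. By the girth, `c i` and `z` have a unique common neighbour `y i`;
let `p i` and `q` be neighbours of `c i` and `z` in the level below. For `d = ±1`, the induced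
path `z, y j, c j, c (j + d), c (j + 2d), c (j + 3d)` closes up through `p (j + 3d)`, a shortest
path in the lower levels and `q` into a cycle whose length is odd (levels alternate along the
lower part) and at least `9`, so it has a chord: `y j c (j + 3d)`, `p (j + 3d) c j` or
`p (j + 3d) y j`. Applying this at `c (j + 3)` from both sides forces `y (j + 3)` to be `y j` or
`y (j + 6)`, which is impossible around a `5`-cycle and, by parity, around a `7`-cycle.
-/

namespace SimpleGraph

variable {V W : Type*} {G : SimpleGraph V}

namespace Walk

variable {u v w : V}

theorem mk_getVert_mem_edges (p : G.Walk u v) {i : ℕ} (hi : i < p.length) :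
    s(p.getVert i, p.getVert (i + 1)) ∈ p.edges :=
  adj_toSubgraph_iff_mem_edges.mp (p.toSubgraph_adj_getVert hi)

theorem IsChordless.map {G' : SimpleGraph W} (f : G ↪g G') {p : G.Walk u v}
    (hp : p.IsChordless) : (p.map f.toHom).IsChordless := by
  rw [isChordless_iff_forall_mem_edges] at hp ⊢
  intro x y hx hy hxy
  simp only [support_map, List.mem_map] at hx hy
  obtain ⟨x, hx, rfl⟩ := hx
  obtain ⟨y, hy, rfl⟩ := hy
  rw [edges_map]
  exact List.mem_map_of_mem (f := Sym2.map f.toHom) (hp hx hy (f.map_adj_iff.mp hxy))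

theorem isChordless_cons {h : G.Adj u v} {p : G.Walk v w} (hp : p.IsChordless)
    (hu : ∀ x ∈ p.support.tail, ¬ G.Adj u x) : (cons h p).IsChordless := by
  have key : ∀ x ∈ p.support, G.Adj u x → s(u, x) ∈ (cons h p).edges := by
    intro x hx hux
    rw [← cons_tail_support, List.mem_cons] at hx
    rcases hx with rfl | hx
    · simp
    · exact absurd hux (hu x hx)
  rw [isChordless_iff_forall_mem_edges] at hp ⊢
  intro x y hx hy hxy
  rw [support_cons, List.mem_cons] at hx hy
  rcases hx with rfl | hx <;> rcases hy with rfl | hy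
  · exact absurd hxy G.irrefl
  · exact key y hy hxy
  · rw [Sym2.eq_swap]
    exact key x hx hxy.symm
  · exact List.mem_cons_of_mem _ (hp hx hy hxy)

theorem isChordless_of_length_eq_dist (p : G.Walk u v) (hp : p.length = G.dist u v) :
    p.IsChordless := by
  rw [isChordless_iff_forall_mem_edges]
  intro x y hx hy hxy
  obtain ⟨i, rfl, hi⟩ := mem_support_iff_exists_getVert.mp hx
  obtain ⟨j, rfl, hj⟩ := mem_support_iff_exists_getVert.mp hy
  clear hx hy
  wlog hij : i ≤ j generalizing i j
  · rw [Sym2.eq_swap]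
    exact this j hj i hi hxy.symm (by omega)
  obtain rfl | rfl | hij : i = j ∨ j = i + 1 ∨ i + 2 ≤ j := by omega
  · exact absurd hxy G.irrefl
  · exact p.mk_getVert_mem_edges (by omega)
  · have := G.dist_le ((p.take i).append (cons hxy (p.drop j)))
    simp only [length_append, length_cons, take_length, drop_length] at this
    omega

theorem IsPath.isCycle_isChordless_append {p : G.Walk u v} {q : G.Walk v u} (hp : p.IsPath)
    (hq : q.IsPath) (hpc : p.IsChordless) (hqc : q.IsChordless) (hlen : 2 ≤ p.length)
    (hint : ∀ x ∈ p.support, ∀ y ∈ q.support, x ≠ u → x ≠ v → y ≠ u → y ≠ v →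
      x ≠ y ∧ ¬ G.Adj x y) :
    (p.append q).IsCycle ∧ (p.append q).IsChordless := by
  have hpq : ∀ x ∈ p.support, ∀ y ∈ q.support, G.Adj x y → s(x, y) ∈ (p.append q).edges := by
    intro x hx y hy hxy
    rw [edges_append, List.mem_append]
    by_cases hx' : x = u ∨ x = v
    · exact .inr (hqc.mem_edges (by rcases hx' with rfl | rfl <;> simp) hy hxy)
    by_cases hy' : y = u ∨ y = v
    · exact .inl (hpc.mem_edges hx (by rcases hy' with rfl | rfl <;> simp) hxy)
    simp only [not_or] at hx' hy'
    exact absurd hxy (hint x hx y hy hx'.1 hx'.2 hy'.1 hy'.2).2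
  refine ⟨hp.isCycle_append hq ?_ (.inl hlen), ?_⟩
  · intro x hxp hxq
    have hxu : x ≠ u := fun h => (List.nodup_cons.mp (p.cons_tail_support ▸ hp.support_nodup)).1
      (h ▸ hxp)
    have hxv : x ≠ v := fun h => (List.nodup_cons.mp (q.cons_tail_support ▸ hq.support_nodup)).1
      (h ▸ hxq)
    exact (hint x (List.mem_of_mem_tail hxp) x (List.mem_of_mem_tail hxq) hxu hxv hxu hxv).1 rfl
  · rw [isChordless_iff_forall_mem_edges]
    intro x y hx hy hxy
    rw [support_append, List.mem_append] at hx hy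
    rcases hx with hx | hx <;> rcases hy with hy | hy
    · exact edges_append p q ▸ List.mem_append_left _ (hpc.mem_edges hx hy hxy)
    · exact hpq x hx y (List.mem_of_mem_tail hy) hxy
    · rw [Sym2.eq_swap]
      exact hpq y hy x (List.mem_of_mem_tail hx) hxy.symm
    · exact edges_append p q ▸ List.mem_append_right _
        (hqc.mem_edges (List.mem_of_mem_tail hx) (List.mem_of_mem_tail hy) hxy)

section MinimalOddClosedWalk

variable {w : G.Walk u u}

/- Cutting a closed walk at a repeated vertex, or along a chord, yields two shorter closed walks
whose lengths add up to `w.length` or `w.length + 2`, so one of them is odd. -/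

theorem getVert_ne_of_minimal_odd (hw : Odd w.length)
    (hmin : ∀ v (w' : G.Walk v v), Odd w'.length → w.length ≤ w'.length) {i j : ℕ}
    (hij : i < j) (hj : j ≤ w.length) (hne : 0 < i ∨ j < w.length) :
    w.getVert i ≠ w.getVert j := by
  intro heq
  have h₁ := hmin _ ((w.take i).append ((w.drop j).copy heq.symm rfl))
  have h₂ := hmin _ (((w.drop i).take (j - i)).copy rfl
    (by rw [drop_getVert, Nat.add_sub_cancel' hij.le, heq]))
  simp only [length_append, length_copy, take_length, drop_length] at h₁ h₂
  rw [Nat.odd_iff] at hw h₁ h₂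
  omega

theorem not_adj_getVert_of_minimal_odd (hw : Odd w.length)
    (hmin : ∀ v (w' : G.Walk v v), Odd w'.length → w.length ≤ w'.length) {i j : ℕ}
    (hij : i + 2 ≤ j) (hj : j ≤ w.length) (hji : j + 2 ≤ w.length + i) :
    ¬ G.Adj (w.getVert i) (w.getVert j) := by
  intro hadj
  have h₁ := hmin _ ((w.take i).append (cons hadj (w.drop j)))
  have h₂ := hmin _ (cons hadj.symm (((w.drop i).take (j - i)).copy rfl
    (by rw [drop_getVert, Nat.add_sub_cancel' (by omega : i ≤ j)])))
  simp only [length_append, length_cons, length_copy, take_length, drop_length] at h₁ h₂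
  rw [Nat.odd_iff] at hw h₁ h₂
  omega

theorem isCycle_of_minimal_odd (hw : Odd w.length)
    (hmin : ∀ v (w' : G.Walk v v), Odd w'.length → w.length ≤ w'.length) : w.IsCycle := by
  have h3 : 3 ≤ w.length := by
    obtain ⟨n, hn⟩ := hw
    by_contra! h
    have := w.adj_getVert_succ (i := 0) (by omega)
    rw [getVert_zero, zero_add, show 1 = w.length by omega, getVert_length] at this
    exact G.irrefl this
  rw [isCycle_iff_isPath_tail_and_le_length, ← IsPath.getVert_injOn_iff]
  refine ⟨fun a ha b hb hab => ?_, h3⟩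
  simp only [Set.mem_ofPred_eq, length_tail, getVert_tail] at ha hb hab
  by_contra hne
  rcases Nat.lt_or_gt_of_ne hne with h | h
  · exact getVert_ne_of_minimal_odd hw hmin (by omega) (by omega) (by omega) hab
  · exact getVert_ne_of_minimal_odd hw hmin (by omega) (by omega) (by omega) hab.symm

theorem isChordless_of_minimal_odd (hw : Odd w.length)
    (hmin : ∀ v (w' : G.Walk v v), Odd w'.length → w.length ≤ w'.length) : w.IsChordless := by
  rw [isChordless_iff_forall_mem_edges]
  intro x y hx hy hxy
  obtain ⟨i, rfl, hi⟩ := mem_support_iff_exists_getVert.mp hx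
  obtain ⟨j, rfl, hj⟩ := mem_support_iff_exists_getVert.mp hy
  clear hx hy
  wlog hij : i ≤ j generalizing i j
  · rw [Sym2.eq_swap]
    exact this j hj i hi hxy.symm (by omega)
  have hlen : w.getVert w.length = w.getVert 0 := by rw [getVert_length, getVert_zero]
  by_cases hji : j + 2 ≤ w.length + i
  · obtain rfl | rfl | hij : i = j ∨ j = i + 1 ∨ i + 2 ≤ j := by omega
    · exact absurd hxy G.irrefl
    · exact w.mk_getVert_mem_edges (by omega)
    · exact absurd hxy (not_adj_getVert_of_minimal_odd hw hmin hij hj hji)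
  · obtain ⟨rfl, rfl⟩ | ⟨rfl, h⟩ | ⟨rfl, rfl⟩ :
        i = 0 ∧ j = w.length ∨ i = 0 ∧ j + 1 = w.length ∨ i = 1 ∧ j = w.length := by omega
    · exact absurd (hlen ▸ hxy) G.irrefl
    · have := w.mk_getVert_mem_edges (i := j) (by omega)
      rwa [h, hlen, Sym2.eq_swap] at this
    · simpa [hlen, Sym2.eq_swap] using w.mk_getVert_mem_edges (i := 0) (by omega)

end MinimalOddClosedWalk

end Walk

theorem exists_odd_isCycle_isChordless (h : ¬ G.Colorable 2) :
    ∃ (u : V) (w : G.Walk u u), w.IsCycle ∧ w.IsChordless ∧ Odd w.length := by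
  classical
  have hex : ∃ n, ∃ (u : V) (w : G.Walk u u), Odd w.length ∧ w.length = n := by
    by_contra! hno
    exact h (two_colorable_iff_forall_loop_even.mpr fun u w =>
      Nat.not_odd_iff_even.mp fun ho => hno _ u w ho rfl)
  obtain ⟨u, w, hw, hlen⟩ := Nat.find_spec hex
  have hmin : ∀ v (w' : G.Walk v v), Odd w'.length → w.length ≤ w'.length :=
    fun v w' ho => hlen ▸ Nat.find_min' hex ⟨v, w', ho, rfl⟩
  exact ⟨u, w, w.isCycle_of_minimal_odd hw hmin, w.isChordless_of_minimal_odd hw hmin, hw⟩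

theorem hasInducedCycle_of_embedding {G' : SimpleGraph W} (f : G' ↪g G) {u : W}
    {w : G'.Walk u u} (hc : w.IsCycle) (hch : w.IsChordless) : G.HasInducedCycle w.length :=
  ⟨_, w.map f.toHom, (Walk.isCycle_map_iff_of_injective f.injective).mpr hc, Walk.length_map _ _,
    Walk.isInduced_toSubgraph.mpr (hch.map f)⟩

theorem edist_eq_two_of_dist_eq_two {u v : V} (h : G.dist u v = 2) : G.edist u v = 2 := by
  rw [← (Reachable.of_dist_ne_zero (h ▸ two_ne_zero)).coe_dist_eq_edist, h]
  rfl

theorem not_adj_of_four_le_egirth (hG : 4 ≤ G.egirth) {a b c : V} (hab : G.Adj a b)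
    (hbc : G.Adj b c) : ¬ G.Adj a c := fun hac => by
  have hcyc : (Walk.cons hab (.cons hbc (.cons hac.symm .nil))).IsCycle := by
    simp [Walk.cons_isCycle_iff, hab.ne, hbc.ne, hac.ne, hab.ne.symm, hac.ne.symm]
  exact absurd (hG.trans (egirth_le_length hcyc)) (by norm_num)

theorem eq_of_five_le_egirth (hG : 5 ≤ G.egirth) {a b x y : V} (hab : a ≠ b) (hxa : G.Adj x a)
    (hxb : G.Adj x b) (hya : G.Adj y a) (hyb : G.Adj y b) : x = y := by
  by_contra hxy
  have hcyc : (Walk.cons hxa.symm (.cons hxb (.cons hyb.symm (.cons hya .nil)))).IsCycle := by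
    simp [Walk.cons_isCycle_iff, hab, hxy, hxa.ne, hxb.ne, hya.ne, hab.symm, hxa.ne.symm,
      hya.ne.symm, hyb.ne.symm]
  exact absurd (hG.trans (egirth_le_length hcyc)) (by norm_num)

theorem eq_five_or_seven_of_hasInducedCycle (hG : 5 ≤ G.egirth)
    (hodd : ∀ n : ℕ, Odd n → 9 ≤ n → ¬ G.HasInducedCycle n) {n : ℕ} (hn : Odd n)
    (h : G.HasInducedCycle n) : n = 5 ∨ n = 7 := by
  have h9 : n < 9 := by
    by_contra! h9
    exact hodd n hn h9 h
  obtain ⟨v, w, hc, rfl, -⟩ := h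
  have h5 : (5 : ℕ∞) ≤ w.length := le_egirth.mp hG v w hc
  obtain ⟨m, hm⟩ := hn
  norm_cast at h5
  omega

structure IsChordlessCycle {m : ℕ} (G : SimpleGraph V) (c : ZMod m → V) : Prop where
  injective : Function.Injective c
  adj : ∀ i, G.Adj (c i) (c (i + 1))
  eq_add_one_of_adj : ∀ {i j}, G.Adj (c i) (c j) → j = i + 1 ∨ i = j + 1

namespace IsChordlessCycle

variable {m : ℕ} {c : ZMod m → V}

theorem adj_add (hc : G.IsChordlessCycle c) {d : ZMod m} (hd : d = 1 ∨ d = -1) (a : ZMod m) :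
    G.Adj (c a) (c (a + d)) := by
  rcases hd with rfl | rfl
  · exact hc.adj a
  · simpa using (hc.adj (a + -1)).symm

theorem not_adj (hc : G.IsChordlessCycle c) {a b : ZMod m} (h₁ : b ≠ a + 1) (h₂ : a ≠ b + 1) :
    ¬ G.Adj (c a) (c b) :=
  fun h => (hc.eq_add_one_of_adj h).elim h₁ h₂

theorem map {G' : SimpleGraph W} (hc : G.IsChordlessCycle c) (f : G ↪g G') :
    G'.IsChordlessCycle fun i => f (c i) :=
  ⟨f.injective.comp hc.injective, fun i => f.map_adj_iff.mpr (hc.adj i),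
    fun h => hc.eq_add_one_of_adj (f.map_adj_iff.mp h)⟩

end IsChordlessCycle

theorem Walk.IsCycle.isChordlessCycle_getVert {u : V} {w : G.Walk u u} (hc : w.IsCycle)
    (hch : w.IsChordless) : G.IsChordlessCycle fun i : ZMod w.length => w.getVert i.val := by
  have : NeZero w.length := ⟨by have := hc.three_le_length; omega⟩
  set c := fun i : ZMod w.length => w.getVert i.val
  have hcast : ∀ n ≤ w.length, c n = w.getVert n := by
    intro n hn
    rcases hn.lt_or_eq with hn | rfl
    · simp [c, ZMod.val_cast_of_lt hn]
    · simp [c, Walk.getVert_length]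
  have hinj : Function.Injective c := by
    intro a b hab
    have := ZMod.val_lt a
    have := ZMod.val_lt b
    exact ZMod.val_injective _ (hc.getVert_injOn' (by simp; omega) (by simp; omega) hab)
  have hsucc : ∀ i : ZMod w.length, c (i + 1) = w.getVert (i.val + 1) := fun i => by
    rw [← hcast _ (ZMod.val_lt i), Nat.cast_succ, ZMod.natCast_zmod_val]
  refine ⟨hinj, fun i => hsucc i ▸ w.adj_getVert_succ (ZMod.val_lt i), fun {a b} hab => ?_⟩
  obtain ⟨t, ht, he⟩ := w.mk_mem_edges_iff_exists.mp
    (hch.mem_edges (w.getVert_mem_support _) (w.getVert_mem_support _) hab)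
  rw [← hcast t ht.le, ← hcast (t + 1) ht, Nat.cast_succ] at he
  change s(c t, c (t + 1)) = s(c a, c b) at he
  rcases Sym2.eq_iff.mp he with ⟨h₁, h₂⟩ | ⟨h₁, h₂⟩
  · exact .inl (by rw [← hinj h₂, hinj h₁])
  · exact .inr (by rw [← hinj h₂, hinj h₁])

section Levelling

variable {L : ℕ → Set V} {k : ℕ} {x y : V} {a b : ℕ}

namespace IsLevelling

theorem eq_of_mem (hL : G.IsLevelling L k) (ha : a ≤ k) (hb : b ≤ k) (hxa : x ∈ L a)
    (hxb : x ∈ L b) : a = b := by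
  by_contra h
  exact Set.disjoint_left.mp (hL.1 a ha b hb h) hxa hxb

theorem ne_of_mem (hL : G.IsLevelling L k) (ha : a ≤ k) (hb : b ≤ k) (hab : a ≠ b)
    (hx : x ∈ L a) (hy : y ∈ L b) : x ≠ y := by
  rintro rfl
  exact hab (hL.eq_of_mem ha hb hx hy)

theorem not_adj (hL : G.IsLevelling L k) (hb : b ≤ k) (hab : a + 2 ≤ b) (hx : x ∈ L a)
    (hy : y ∈ L b) : ¬ G.Adj x y :=
  (hL.2.2 b (by omega) hb y hy).2 a hab x hx

theorem exists_adj (hL : G.IsLevelling L k) (ha : a + 1 ≤ k) (hy : y ∈ L (a + 1)) :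
    ∃ x ∈ L a, G.Adj x y :=
  (hL.2.2 (a + 1) (by omega) ha y hy).1

theorem exists_walk_to_root (hL : G.IsLevelling L k) {v₀ : V} (hv₀ : L 0 = {v₀}) (ha : a ≤ k)
    (hx : x ∈ L a) : ∃ W : G.Walk x v₀, ∀ y ∈ W.support, y = x ∨ ∃ h < a, y ∈ L h := by
  induction a generalizing x with
  | zero =>
    rw [hv₀, Set.mem_singleton_iff] at hx
    subst hx
    exact ⟨.nil, by simp⟩
  | succ a ih =>
    obtain ⟨x', hx', hadj⟩ := hL.exists_adj ha hx
    obtain ⟨W, hW⟩ := ih (by omega) hx'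
    refine ⟨.cons hadj.symm W, fun y hy => ?_⟩
    rw [Walk.support_cons, List.mem_cons] at hy
    rcases hy with rfl | hy
    · exact .inl rfl
    · rcases hW y hy with rfl | ⟨h, hh, hy⟩
      · exact .inr ⟨a, by omega, hx'⟩
      · exact .inr ⟨h, by omega, hy⟩

theorem exists_walk_through_lower (hL : G.IsLevelling L (k + 1)) {z c p q : V} (hp : p ∈ L k)
    (hq : q ∈ L k) (hpc : G.Adj p c) (hqz : G.Adj q z) :
    ∃ W : G.Walk c z, ∀ x ∈ W.support, x = c ∨ x = z ∨ x = p ∨ x = q ∨ ∃ h < k, x ∈ L h := by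
  obtain ⟨v₀, hv₀⟩ := hL.2.1
  obtain ⟨Wp, hWp⟩ := hL.exists_walk_to_root hv₀ (by omega) hp
  obtain ⟨Wq, hWq⟩ := hL.exists_walk_to_root hv₀ (by omega) hq
  refine ⟨.cons hpc.symm (Wp.append (Wq.reverse.concat hqz)), fun x hx => ?_⟩
  simp only [Walk.support_cons, Walk.support_append, Walk.support_concat, Walk.support_reverse,
    List.mem_cons, List.mem_append] at hx
  rcases hx with rfl | hx | hx
  · exact .inl rfl
  · rcases hWp x hx with rfl | h
    · exact .inr (.inr (.inl rfl))
    · exact .inr (.inr (.inr (.inr h)))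
  · rcases List.mem_append.mp (List.mem_of_mem_tail hx) with hx | hx
    · rcases hWq x (List.mem_reverse.mp hx) with rfl | h
      · exact .inr (.inr (.inr (.inl rfl)))
      · exact .inr (.inr (.inr (.inr h)))
    · exact .inr (.inl (List.mem_singleton.mp hx))

end IsLevelling

namespace IsStableLevelling

theorem eq_add_one_or_eq_add_one_of_adj (hL : G.IsStableLevelling L k) (ha : a ≤ k)
    (hb : b ≤ k) (hab : a < k ∨ b < k) (hx : x ∈ L a) (hy : y ∈ L b) (hxy : G.Adj x y) :
    a = b + 1 ∨ b = a + 1 := by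
  by_contra hne
  obtain rfl | h | h : a = b ∨ a + 2 ≤ b ∨ b + 2 ≤ a := by omega
  · exact hL.2 a (by omega) x hx y hy hxy
  · exact hL.1.not_adj hb h hx hy hxy
  · exact hL.1.not_adj ha h hy hx hxy.symm

theorem even_length_add (hL : G.IsStableLevelling L k) {u v : V} (W : G.Walk u v)
    (hW : ∀ x ∈ W.support, ∃ a ≤ k, x ∈ L a)
    (hWk : ∀ x ∈ W.support, ∀ y ∈ W.support, x ∈ L k → y ∈ L k → ¬ G.Adj x y)
    (ha : a ≤ k) (hb : b ≤ k) (hu : u ∈ L a) (hv : v ∈ L b) : Even (W.length + a + b) := by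
  induction W generalizing a with
  | nil =>
    rw [hL.1.eq_of_mem ha hb hu hv]
    simp
  | @cons u u' v hadj W ih =>
    obtain ⟨a', ha', hu'⟩ := hW u' (by simp)
    have hlev := hL.eq_add_one_or_eq_add_one_of_adj ha ha' (by
      by_contra! h
      exact hWk u (by simp) u' (by simp) (by rwa [show a = k by omega] at hu)
        (by rwa [show a' = k by omega] at hu') hadj) hu hu' hadj
    have := ih (fun x hx => hW x (by simp [hx]))
      (fun x hx y hy => hWk x (by simp [hx]) y (by simp [hy])) ha' hu' hv
    rw [Walk.length_cons]
    rcases hlev with rfl | rfl <;> rw [Nat.even_iff] at this ⊢ <;> omega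

theorem even_length_of_walk_through_lower (hL : G.IsStableLevelling L (k + 1)) {z c p q : V}
    (hz : z ∈ L (k + 1)) (hc : c ∈ L (k + 1)) (hp : p ∈ L k) (hq : q ∈ L k) (hzc : ¬ G.Adj z c)
    (W : G.Walk c z)
    (hW : ∀ x ∈ W.support, x = c ∨ x = z ∨ x = p ∨ x = q ∨ ∃ h < k, x ∈ L h) :
    Even W.length := by
  have htop : ∀ x ∈ W.support, x ∈ L (k + 1) → x = c ∨ x = z := by
    intro x hx hxk
    rcases hW x hx with rfl | rfl | rfl | rfl | ⟨h, hh, hx⟩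
    · exact .inl rfl
    · exact .inr rfl
    · exact absurd (hL.1.eq_of_mem (by omega) le_rfl hp hxk) (by omega)
    · exact absurd (hL.1.eq_of_mem (by omega) le_rfl hq hxk) (by omega)
    · exact absurd (hL.1.eq_of_mem (by omega) le_rfl hx hxk) (by omega)
  have := hL.even_length_add W
    (fun x hx => by
      rcases hW x hx with rfl | rfl | rfl | rfl | ⟨h, hh, hx⟩
      exacts [⟨_, le_rfl, hc⟩, ⟨_, le_rfl, hz⟩, ⟨k, by omega, hp⟩, ⟨k, by omega, hq⟩,
        ⟨h, by omega, hx⟩])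
    (fun x hx y hy hxk hyk => by
      rcases htop x hx hxk with rfl | rfl <;> rcases htop y hy hyk with rfl | rfl
      exacts [G.irrefl, fun h => hzc h.symm, hzc, G.irrefl])
    le_rfl le_rfl hc hz
  rwa [add_assoc, ← two_mul, Nat.even_add, iff_true_right (even_two_mul _)] at this

theorem exists_path_through_lower (hL : G.IsStableLevelling L (k + 1)) {z c p q : V}
    (hz : z ∈ L (k + 1)) (hc : c ∈ L (k + 1)) (hp : p ∈ L k) (hq : q ∈ L k) (hzc : ¬ G.Adj z c)
    (hpc : G.Adj p c) (hqz : G.Adj q z) (hpz : ¬ G.Adj p z) (hqc : ¬ G.Adj q c) :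
    ∃ P : G.Walk c z, P.IsPath ∧ P.IsChordless ∧ Even P.length ∧ 4 ≤ P.length ∧
      ∀ x ∈ P.support, x = c ∨ x = z ∨ x = p ∨ x = q ∨ ∃ h < k, x ∈ L h := by
  set U : Set V := {x | x = c ∨ x = z ∨ x = p ∨ x = q ∨ ∃ h < k, x ∈ L h}
  obtain ⟨W, hW⟩ := hL.1.exists_walk_through_lower hp hq hpc hqz
  have hreach : (G.induce U).Reachable ⟨c, .inl rfl⟩ ⟨z, .inr (.inl rfl)⟩ := ⟨W.induce U hW⟩
  obtain ⟨W', hW'⟩ := hreach.exists_walk_length_eq_dist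
  set P : G.Walk c z := W'.map (Embedding.induce U).toHom
  have hPU : ∀ x ∈ P.support, x ∈ U := by
    intro x hx
    obtain ⟨y, -, rfl⟩ := List.mem_map.mp (Walk.support_map _ _ ▸ hx)
    exact y.2
  have heven := hL.even_length_of_walk_through_lower hz hc hp hq hzc P hPU
  have hlen : 4 ≤ P.length := by
    by_contra! hlt
    obtain h | h | h | h : P.length = 0 ∨ P.length = 1 ∨ P.length = 2 ∨ P.length = 3 := by omega
    · exact hqc (Walk.eq_of_length_eq_zero h ▸ hqz)
    · exact hzc (Walk.adj_of_length_eq_one h).symm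
    · have h₁ : G.Adj c (P.getVert 1) := by simpa using P.adj_getVert_succ (i := 0) (by omega)
      have h₂ : G.Adj (P.getVert 1) z := by
        have := P.adj_getVert_succ (i := 1) (by omega)
        rwa [show 1 + 1 = P.length by omega, Walk.getVert_length] at this
      have hm := hPU _ (P.getVert_mem_support 1)
      generalize P.getVert 1 = m at h₁ h₂ hm
      rcases hm with rfl | rfl | rfl | rfl | ⟨h', hh, hm⟩
      exacts [G.irrefl h₁, G.irrefl h₂, hpz h₂, hqc h₁.symm,
        hL.1.not_adj le_rfl (by omega) hm hc h₁.symm]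
    · rw [h] at heven
      exact absurd heven (by decide)
  exact ⟨P, (W'.isPath_of_length_eq_dist hW').map Subtype.val_injective,
    (W'.isChordless_of_length_eq_dist hW').map _, heven, hlen, hPU⟩

theorem exists_hasInducedCycle (hL : G.IsStableLevelling L (k + 1)) {z c p q : V}
    {P : G.Walk z c} (hP : P.IsPath) (hPc : P.IsChordless) (hlen : 2 ≤ P.length)
    (hPL : ∀ x ∈ P.support, x ∈ L (k + 1)) (hp : p ∈ L k) (hq : q ∈ L k) (hpc : G.Adj p c)
    (hqz : G.Adj q z) (hpP : ∀ x ∈ P.support, G.Adj p x → x = c)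
    (hqP : ∀ x ∈ P.support, G.Adj q x → x = z) :
    ∃ t, 2 ≤ t ∧ G.HasInducedCycle (P.length + 2 * t) := by
  have hzc : z ≠ c := fun h => by
    have := (hP.getVert_eq_end_iff (i := 0) (by omega)).mp (by rw [Walk.getVert_zero, h])
    omega
  have hzc' : ¬ G.Adj z c := fun h => by
    have := hP.eq_snd_of_mem_edges (hPc.mem_edges P.start_mem_support P.end_mem_support h)
    have := (hP.getVert_eq_end_iff (i := 1) (by omega)).mp this.symm
    omega
  obtain ⟨Q, hQ, hQc, ⟨t, ht⟩, hQlen, hQU⟩ := hL.exists_path_through_lower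
    (hPL z P.start_mem_support) (hPL c P.end_mem_support) hp hq hzc' hpc hqz
    (fun h => hzc (hpP z P.start_mem_support h)) (fun h => hzc (hqP c P.end_mem_support h).symm)
  obtain ⟨hcyc, hch⟩ := hP.isCycle_isChordless_append hQ hPc hQc hlen
    fun x hx y hy hxz hxc hyz hyc => by
      have hxL := hPL x hx
      rcases hQU y hy with rfl | rfl | rfl | rfl | ⟨h, hh, hyL⟩
      · exact absurd rfl hyc
      · exact absurd rfl hyz
      · exact ⟨hL.1.ne_of_mem le_rfl (by omega) (by omega) hxL hp,
          fun h => hxc (hpP x hx h.symm)⟩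
      · exact ⟨hL.1.ne_of_mem le_rfl (by omega) (by omega) hxL hq,
          fun h => hxz (hqP x hx h.symm)⟩
      · exact ⟨hL.1.ne_of_mem le_rfl (by omega) (by omega) hxL hyL,
          fun h => hL.1.not_adj le_rfl (by omega) hyL hxL h.symm⟩
  exact ⟨t, by omega, z, P.append Q, hcyc, by rw [Walk.length_append, ht, two_mul],
    Walk.isInduced_toSubgraph.mpr hch⟩

end IsStableLevelling

end Levelling

/-- The configuration of the proof: `c` lies in the second neighbourhood of `z`, and `p i`, `q`
are parents of `c i`, `z`. -/
structure CycleAtDistanceTwo (G : SimpleGraph V) (L : ℕ → Set V) (k m : ℕ) where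
  z : V
  q : V
  c : ZMod m → V
  y : ZMod m → V
  p : ZMod m → V
  isChordlessCycle : G.IsChordlessCycle c
  z_mem : z ∈ L (k + 1)
  q_mem : q ∈ L k
  c_mem : ∀ i, c i ∈ L (k + 1)
  y_mem : ∀ i, y i ∈ L (k + 1)
  p_mem : ∀ i, p i ∈ L k
  z_ne_c : ∀ i, z ≠ c i
  not_adj_z_c : ∀ i, ¬ G.Adj z (c i)
  adj_z_y : ∀ i, G.Adj z (y i)
  adj_y_c : ∀ i, G.Adj (y i) (c i)
  adj_p_c : ∀ i, G.Adj (p i) (c i)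
  adj_q_z : G.Adj q z

namespace CycleAtDistanceTwo

variable {L : ℕ → Set V} {k m : ℕ} (C : CycleAtDistanceTwo G L k m)

theorem y_ne_c (i j : ZMod m) : C.y i ≠ C.c j :=
  fun h => C.not_adj_z_c j (h ▸ C.adj_z_y i)

theorem eq_y_of_adj (hG : 5 ≤ G.egirth) {i j : ZMod m} (h : G.Adj (C.y i) (C.c j)) :
    C.y i = C.y j :=
  eq_of_five_le_egirth hG (C.z_ne_c j) (C.adj_z_y i).symm h (C.adj_z_y j).symm (C.adj_y_c j)

theorem y_ne_y_of_adj (hG : 5 ≤ G.egirth) {i j : ZMod m} (h : G.Adj (C.c i) (C.c j)) :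
    C.y i ≠ C.y j := fun hy =>
  not_adj_of_four_le_egirth (le_trans (by norm_num) hG) (C.adj_y_c i) h (hy ▸ C.adj_y_c j)

theorem y_ne_y_add_two (hG : 5 ≤ G.egirth) (h2 : (2 : ZMod m) ≠ 0) (i : ZMod m) :
    C.y i ≠ C.y (i + 2) := fun hy => by
  have hc := C.isChordlessCycle
  refine C.y_ne_c i (i + 1) (eq_of_five_le_egirth hG (a := C.c i) (b := C.c (i + 2))
    (hc.injective.ne ?_) (C.adj_y_c i) (hy ▸ C.adj_y_c (i + 2)) (hc.adj i).symm ?_)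
  · simpa using h2
  · simpa [add_assoc, one_add_one_eq_two] using hc.adj (i + 1)

theorem not_adj_p_z (hG : 5 ≤ G.egirth) (hL : G.IsLevelling L (k + 1)) (i : ZMod m) :
    ¬ G.Adj (C.p i) C.z := fun h =>
  hL.ne_of_mem (by omega) le_rfl (by omega) (C.p_mem i) (C.y_mem i)
    (eq_of_five_le_egirth hG (C.z_ne_c i) h (C.adj_p_c i) (C.adj_z_y i).symm (C.adj_y_c i))

theorem not_adj_q_y (hG : 5 ≤ G.egirth) (i : ZMod m) : ¬ G.Adj C.q (C.y i) :=
  not_adj_of_four_le_egirth (le_trans (by norm_num) hG) C.adj_q_z (C.adj_z_y i)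

theorem not_adj_q_c (hG : 5 ≤ G.egirth) (hL : G.IsLevelling L (k + 1)) (i : ZMod m) :
    ¬ G.Adj C.q (C.c i) := fun h =>
  hL.ne_of_mem (by omega) le_rfl (by omega) C.q_mem (C.y_mem i)
    (eq_of_five_le_egirth hG (C.z_ne_c i) C.adj_q_z h (C.adj_z_y i).symm (C.adj_y_c i))

theorem adj_c_add_six (hm : m = 5 ∨ m = 7) (j : ZMod m) : G.Adj (C.c j) (C.c (j + 6)) := by
  have hc := C.isChordlessCycle
  rcases hm with rfl | rfl
  · exact hc.adj j
  · have := (hc.adj (j + 6)).symm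
    rwa [add_assoc, show (6 : ZMod 7) + 1 = 0 from rfl, add_zero] at this

theorem exists_path_from_z (hG : 5 ≤ G.egirth) (hm : m = 5 ∨ m = 7) (j d : ZMod m)
    (hd : d = 1 ∨ d = -1) (hA : ¬ G.Adj (C.y j) (C.c (j + d + d + d))) :
    ∃ P : G.Walk C.z (C.c (j + d + d + d)), P.IsPath ∧ P.IsChordless ∧ P.length = 5 ∧
      ∀ x ∈ P.support, x = C.z ∨ x = C.y j ∨ x = C.c j ∨ x = C.c (j + d) ∨
        x = C.c (j + d + d) ∨ x = C.c (j + d + d + d) := by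
  have hc := C.isChordlessCycle
  have hoff : ∀ j d : ZMod m, d = 1 ∨ d = -1 →
      j ≠ j + d ∧ j ≠ j + d + d ∧ j ≠ j + d + d + d ∧ j + d ≠ j + d + d ∧
      j + d ≠ j + d + d + d ∧ j + d + d ≠ j + d + d + d ∧ j + d + d ≠ j + 1 ∧
      j ≠ j + d + d + 1 ∧ j + d + d + d ≠ j + 1 ∧ j ≠ j + d + d + d + 1 ∧
      j + d + d + d ≠ j + d + 1 ∧ j + d ≠ j + d + d + d + 1 := by
    rcases hm with rfl | rfl <;> decide
  obtain ⟨h01, h02, h03, h12, h13, h23, n02, n02', n03, n03', n13, n13'⟩ := hoff j d hd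
  refine ⟨.cons (C.adj_z_y j) (.cons (C.adj_y_c j) (.cons (hc.adj_add hd j)
    (.cons (hc.adj_add hd (j + d)) (.cons (hc.adj_add hd (j + d + d)) .nil)))), ?_, ?_, rfl, ?_⟩
  · simp [Walk.cons_isPath_iff, (C.adj_z_y j).ne, C.z_ne_c, C.y_ne_c, hc.injective.ne h01,
      hc.injective.ne h02, hc.injective.ne h03, hc.injective.ne h12, hc.injective.ne h13,
      hc.injective.ne h23]
  · refine Walk.isChordless_cons (Walk.isChordless_cons (Walk.isChordless_cons
      (Walk.isChordless_cons (hc.adj_add hd (j + d + d)).isChordless_toWalk ?_) ?_) ?_) ?_ <;>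
      simp only [Walk.support_cons, Walk.support_nil, List.tail_cons, List.mem_cons,
        List.not_mem_nil, or_false]
    · rintro x rfl
      exact hc.not_adj n13 n13'
    · rintro x (rfl | rfl)
      exacts [hc.not_adj n02 n02', hc.not_adj n03 n03']
    · rintro x (rfl | rfl | rfl)
      · exact not_adj_of_four_le_egirth (le_trans (by norm_num) hG) (C.adj_y_c j)
          (hc.adj_add hd j)
      · exact fun h => C.y_ne_c j (j + d) (eq_of_five_le_egirth hG (hc.injective.ne h02)
          (C.adj_y_c j) h (hc.adj_add hd j).symm (hc.adj_add hd (j + d)))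
      · exact hA
    · rintro x (rfl | rfl | rfl | rfl)
      all_goals exact C.not_adj_z_c _
  · intro x hx
    simpa using hx

theorem adj_y_c_or_adj_p_c_or_adj_p_y (hG : 5 ≤ G.egirth) (hL : G.IsStableLevelling L (k + 1))
    (hodd : ∀ n : ℕ, Odd n → 9 ≤ n → ¬ G.HasInducedCycle n) (hm : m = 5 ∨ m = 7)
    (j d : ZMod m) (hd : d = 1 ∨ d = -1) :
    G.Adj (C.y j) (C.c (j + 3 * d)) ∨ G.Adj (C.p (j + 3 * d)) (C.c j) ∨
      G.Adj (C.p (j + 3 * d)) (C.y j) := by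
  have hc := C.isChordlessCycle
  have h13 : j + d ≠ j + d + d + d := by
    have : ∀ j d : ZMod m, d = 1 ∨ d = -1 → j + d ≠ j + d + d + d := by
      rcases hm with rfl | rfl <;> decide
    exact this j d hd
  rw [show j + 3 * d = j + d + d + d by ring]
  by_contra! h
  obtain ⟨hA, hB, hD⟩ := h
  obtain ⟨P, hP, hPc, hlen, hPs⟩ := C.exists_path_from_z hG hm j d hd hA
  obtain ⟨t, ht, hcyc⟩ := hL.exists_hasInducedCycle hP hPc (by omega)
    (fun x hx => by
      rcases hPs x hx with rfl | rfl | rfl | rfl | rfl | rfl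
      exacts [C.z_mem, C.y_mem j, C.c_mem _, C.c_mem _, C.c_mem _, C.c_mem _])
    (C.p_mem _) C.q_mem (C.adj_p_c _) C.adj_q_z
    (fun x hx hpx => by
      rcases hPs x hx with rfl | rfl | rfl | rfl | rfl | rfl
      · exact absurd hpx (C.not_adj_p_z hG hL.1 _)
      · exact absurd hpx hD
      · exact absurd hpx hB
      · exact absurd (eq_of_five_le_egirth hG (hc.injective.ne h13) hpx (C.adj_p_c _)
          (hc.adj_add hd (j + d)).symm (hc.adj_add hd (j + d + d)))
          (hL.1.ne_of_mem (by omega) le_rfl (by omega) (C.p_mem _) (C.c_mem _))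
      · exact absurd hpx (not_adj_of_four_le_egirth (le_trans (by norm_num) hG) (C.adj_p_c _)
          (hc.adj_add hd (j + d + d)).symm)
      · rfl)
    (fun x hx hqx => by
      rcases hPs x hx with rfl | rfl | rfl | rfl | rfl | rfl
      · rfl
      · exact absurd hqx (C.not_adj_q_y hG j)
      all_goals exact absurd hqx (C.not_adj_q_c hG hL.1 _))
  exact hodd _ (by rw [hlen]; exact ⟨t + 2, by ring⟩) (by omega) hcyc

/-- Otherwise `p (j + 3)` would have two neighbours on the `5`-cycle
`z, y j, c j, c (j + 6), y (j + 6)`. -/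
theorem y_eq_or_y_eq (hG : 5 ≤ G.egirth) (hL : G.IsStableLevelling L (k + 1))
    (hodd : ∀ n : ℕ, Odd n → 9 ≤ n → ¬ G.HasInducedCycle n) (hm : m = 5 ∨ m = 7) (j : ZMod m) :
    C.y j = C.y (j + 3) ∨ C.y (j + 6) = C.y (j + 3) := by
  have h₁ := C.adj_y_c_or_adj_p_c_or_adj_p_y hG hL hodd hm j 1 (.inl rfl)
  have h₂ := C.adj_y_c_or_adj_p_c_or_adj_p_y hG hL hodd hm (j + 6) (-1) (.inr rfl)
  rw [mul_one] at h₁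
  rw [show j + 6 + 3 * -1 = j + 3 by ring] at h₂
  rcases h₁ with h₁ | h₁
  · exact .inl (C.eq_y_of_adj hG h₁)
  rcases h₂ with h₂ | h₂
  · exact .inr (C.eq_y_of_adj hG h₂)
  have h6 := C.adj_c_add_six hm j
  have hne : ∀ x ∈ L (k + 1), C.p (j + 3) ≠ x := fun x hx =>
    hL.1.ne_of_mem (by omega) le_rfl (by omega) (C.p_mem _) hx
  exfalso
  rcases h₁ with h₁ | h₁ <;> rcases h₂ with h₂ | h₂
  · exact not_adj_of_four_le_egirth (le_trans (by norm_num) hG) h₁ h6 h₂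
  · exact hne _ (C.c_mem _) (eq_of_five_le_egirth hG (C.y_ne_c _ _).symm h₁ h₂ h6.symm
      (C.adj_y_c _).symm)
  · exact hne _ (C.c_mem _) (eq_of_five_le_egirth hG (C.y_ne_c _ _) h₁ h₂ (C.adj_y_c _).symm h6)
  · exact hne _ C.z_mem (eq_of_five_le_egirth hG (C.y_ne_y_of_adj hG h6) h₁ h₂
      (C.adj_z_y _) (C.adj_z_y _))

theorem isEmpty (hG : 5 ≤ G.egirth) (hL : G.IsStableLevelling L (k + 1))
    (hodd : ∀ n : ℕ, Odd n → 9 ≤ n → ¬ G.HasInducedCycle n) (hm : m = 5 ∨ m = 7) :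
    IsEmpty (CycleAtDistanceTwo G L k m) := by
  refine ⟨fun C => ?_⟩
  have hy := C.y_eq_or_y_eq hG hL hodd hm
  rcases hm with rfl | rfl
  · rcases hy 0 with h | h
    · exact C.y_ne_y_add_two hG (by decide) 3 h.symm
    · exact C.y_ne_y_add_two hG (by decide) 1 h
  · have key : ∀ j : ZMod 7, C.y (j + 3) = C.y (j + 6) ↔ ¬ C.y j = C.y (j + 3) := fun j =>
      ⟨fun h h' => C.y_ne_y_of_adj hG (C.adj_c_add_six (.inr rfl) j) (h'.trans h),
        fun h => ((hy j).resolve_left h).symm⟩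
    have k₀ : C.y 3 = C.y 6 ↔ ¬ C.y 0 = C.y 3 := key 0
    have k₃ : C.y 6 = C.y 2 ↔ ¬ C.y 3 = C.y 6 := key 3
    have k₆ : C.y 2 = C.y 5 ↔ ¬ C.y 6 = C.y 2 := key 6
    have k₂ : C.y 5 = C.y 1 ↔ ¬ C.y 2 = C.y 5 := key 2
    have k₅ : C.y 1 = C.y 4 ↔ ¬ C.y 5 = C.y 1 := key 5
    have k₁ : C.y 4 = C.y 0 ↔ ¬ C.y 1 = C.y 4 := key 1
    have k₄ : C.y 0 = C.y 3 ↔ ¬ C.y 4 = C.y 0 := key 4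
    tauto

theorem nonempty_of_isCycle (hL : G.IsLevelling L (k + 1)) {S : Set V} (hS : S ⊆ L (k + 1))
    (z : S) {u : {x : S | (G.induce S).dist z x = 2}}
    {w : ((G.induce S).induce {x : S | (G.induce S).dist z x = 2}).Walk u u} (hc : w.IsCycle)
    (hch : w.IsChordless) : Nonempty (CycleAtDistanceTwo G L k w.length) := by
  set c := fun i : ZMod w.length => w.getVert i.val
  have hdist := fun i => edist_eq_two_iff.mp (edist_eq_two_of_dist_eq_two (c i).2)
  choose y hy using fun i => (hdist i).2.2
  choose p hp hpc using fun i => hL.exists_adj le_rfl (hS (c i).1.2)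
  obtain ⟨q, hq, hqz⟩ := hL.exists_adj le_rfl (hS z.2)
  exact ⟨{ z := z, q := q, c := fun i => (c i).1.1, y := fun i => (y i).1, p := p
           isChordlessCycle := (hc.isChordlessCycle_getVert hch).map
             ((Embedding.induce _).trans (Embedding.induce S))
           z_mem := hS z.2, q_mem := hq, c_mem := fun i => hS (c i).1.2
           y_mem := fun i => hS (y i).2, p_mem := hp
           z_ne_c := fun i h => (hdist i).1 (Subtype.ext h)
           not_adj_z_c := fun i => (hdist i).2.1
           adj_z_y := fun i => (hy i).1, adj_y_c := fun i => (hy i).2.symm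
           adj_p_c := hpc, adj_q_z := hqz }⟩

end CycleAtDistanceTwo

end SimpleGraph

theorem stmt_6_general {V : Type*} (G : SimpleGraph V)
    (hgirth : (5 : ℕ∞) ≤ G.egirth)
    (hodd : ∀ n : ℕ, Odd n → 9 ≤ n → ¬ G.HasInducedCycle n)
    (L : ℕ → Set V) (k : ℕ) (hL : G.IsStableLevelling L k)
    (S : Set V) (hS : S ⊆ L k) (z : ↥S) :
    ((G.induce S).induce {w : ↥S | (G.induce S).dist z w = 2}).chromaticNumber ≤ 2 := by
  suffices hcol : ((G.induce S).induce {w : ↥S | (G.induce S).dist z w = 2}).Colorable 2 by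
    exact_mod_cast hcol.chromaticNumber_le
  by_contra hnc
  obtain ⟨u, w, hc, hch, hw⟩ := exists_odd_isCycle_isChordless hnc
  have hm := eq_five_or_seven_of_hasInducedCycle hgirth hodd hw
    (hasInducedCycle_of_embedding ((Embedding.induce _).trans (Embedding.induce S)) hc hch)
  cases k with
  | zero =>
    obtain ⟨v₀, hv₀⟩ := hL.1.2.1
    have h₁ := hv₀ ▸ hS z.2
    have h₂ := hv₀ ▸ hS u.1.2
    rw [Set.mem_singleton_iff] at h₁ h₂
    simpa [show u.1 = z from Subtype.ext (h₂.trans h₁.symm)] using u.2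
  | succ k =>
    obtain ⟨C⟩ := CycleAtDistanceTwo.nonempty_of_isCycle hL.1 hS z hc hch
    exact (CycleAtDistanceTwo.isEmpty hgirth hL hodd hm).false C

/-- If `(L 0, …, L k)` is a stable levelling of a graph `G` of girth at least 5 with no odd
hole of length at least 9, and `H` is an induced subgraph of `G[L k]`, then for every
`z ∈ V(H)` the subgraph of `H` induced on the vertices at distance exactly 2 from `z` in `H`
is 2-colorable. -/
theorem stmt_6 {V : Type*} [Fintype V] (G : SimpleGraph V)
    (hgirth : (5 : ℕ∞) ≤ G.egirth)
    (hodd : ∀ n : ℕ, Odd n → 9 ≤ n → ¬ G.HasInducedCycle n)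
    (L : ℕ → Set V) (k : ℕ) (hL : G.IsStableLevelling L k)
    (S : Set V) (hS : S ⊆ L k) (z : ↥S) :
    ((G.induce S).induce {w : ↥S | (G.induce S).dist z w = 2}).chromaticNumber ≤ 2 :=
  stmt_6_general G hgirth hodd L k hL S hS z
end

section
/- Let G be a simple graph of girth at least 5 with no odd hole of length at least 9, let (L_0, …, L_k) be a stable levelling of G, and let H be an induced subgraph of G[L_k]. Then for every z ∈ V(H), the graph H[N_H^2(z)] contains no 5-hole and no 7-hole. -/
open SimpleGraph

/-!
In a stable levelling, an induced odd path of length `ℓ ≥ 5` whose ends lie in `L i` and whose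
interior lies above `L i` can be pushed one level down by attaching parents `pu`, `pv` of its
ends, unless the ends already have a common neighbour in `L (i - 1)`. If `pu` and `pv` have a
common parent, the path closes into an odd hole of length `ℓ + 4 ≥ 9`. As `L 0` is a single
vertex, induction downwards shows that the ends of such a path always have a common neighbour one
level down.

Let `c` be a 5- or 7-hole in `H[N²(z)]` and `m i` a common neighbour of `z` and `c i`. Girth at
least 5 makes the paths below induced. For a parent `p` of `z` and a parent `q` of `c 0`, the
path `p z m₁ c₁ c₀ q` yields a common parent `r` of `p` and `q`. Then `q` must meet the induced
path `z m₃ c₃ c₂ c₁ c₀` outside `c₀`, or `r p z m₃ c₃ c₂ c₁ c₀ q` is a 9-hole; the same holds for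
the mirror image. For `n = 5` this forces `m₂ = m₃`, a triangle. For `n = 7` it forces
every `c j` to share its `m` with exactly one of `c (j + 3)`, `c (j - 3)`, i.e. a perfect
matching of the 7-cycle `j ↦ j + 3`, which does not exist.
-/

lemma ZMod.natCast_ne_natCast_of_lt {n a b : ℕ} (ha : a < n) (hb : b < n) (hab : a ≠ b) :
    (a : ZMod n) ≠ b := fun h => hab <| by
  simpa [ZMod.val_natCast_of_lt ha, ZMod.val_natCast_of_lt hb] using congrArg ZMod.val h

/-- `i ↦ i + 4` runs through `ZMod 7` as a cycle of odd length, which cannot be properly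
2-coloured. -/
lemma ZMod.not_forall_iff_not_add_four (P : ZMod 7 → Prop) : ¬ ∀ i, P i ↔ ¬ P (i + 4) := by
  intro h
  have step : ∀ i, P i ↔ P (i + 1) := fun i => by
    rw [h i, h (i + 4), not_not, show i + 4 + 4 = i + 1 by ring_nf; rfl]
  have h04 : P 0 ↔ P 4 := (step 0).trans <| (step 1).trans <| (step 2).trans (step 3)
  have := h 0
  tauto

namespace SimpleGraph

variable {V : Type*} {G : SimpleGraph V}

section Girth

variable {a b c d : V}

lemma not_adj_of_five_le_egirth (hg : 5 ≤ G.egirth) (hab : G.Adj a b) (hbc : G.Adj b c) :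
    ¬ G.Adj a c := by
  intro hac
  have hcyc : (Walk.cons hab (Walk.cons hbc (Walk.cons hac.symm .nil))).IsCycle := by
    simp [Walk.cons_isCycle_iff, hab.ne, hbc.ne, hac.ne, hab.ne', hac.ne']
  have := le_egirth.mp hg _ _ hcyc
  norm_num at this

lemma eq_of_five_le_egirth_s7 (hg : 5 ≤ G.egirth) (hac : a ≠ c) (hab : G.Adj a b)
    (hbc : G.Adj b c) (had : G.Adj a d) (hdc : G.Adj d c) : b = d := by
  by_contra hbd
  have hcyc :
      (Walk.cons hab (Walk.cons hbc (Walk.cons hdc.symm (Walk.cons had.symm .nil)))).IsCycle := by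
    simp [Walk.cons_isCycle_iff, hab.ne, hbc.ne, had.ne, hab.ne', hdc.ne', had.ne', hac, hbd,
      hac.symm]
  have := le_egirth.mp hg _ _ hcyc
  norm_num at this

end Girth

namespace Walk

variable {u v x y : V}

structure IsInducedPath (p : G.Walk u v) : Prop where
  isPath : p.IsPath
  isChordless : p.IsChordless

lemma IsInducedPath.nil : (nil : G.Walk u u).IsInducedPath :=
  ⟨.nil, by simp [isChordless_iff_forall_mem_edges]⟩

lemma IsInducedPath.reverse {p : G.Walk u v} (hp : p.IsInducedPath) : p.reverse.IsInducedPath := by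
  refine ⟨hp.isPath.reverse, isChordless_iff_forall_mem_edges.mpr fun a b ha hb hab => ?_⟩
  rw [support_reverse, List.mem_reverse] at ha hb
  simpa using hp.isChordless.mem_edges ha hb hab

lemma IsInducedPath.cons {p : G.Walk u v} (hp : p.IsInducedPath) (h : G.Adj x u)
    (hx : x ∉ p.support) (hxp : ∀ y ∈ p.support, G.Adj x y → y = u) :
    (cons h p).IsInducedPath := by
  refine ⟨hp.isPath.cons hx, isChordless_iff_forall_mem_edges.mpr fun a b ha hb hab => ?_⟩
  simp only [support_cons, List.mem_cons, edges_cons] at ha hb ⊢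
  rcases ha with rfl | ha <;> rcases hb with rfl | hb
  · exact (hab.ne rfl).elim
  · exact .inl (by rw [hxp b hb hab])
  · exact .inl (by rw [hxp a ha hab.symm, Sym2.eq_swap])
  · exact .inr (hp.isChordless.mem_edges ha hb hab)

lemma IsInducedPath.concat {p : G.Walk u v} (hp : p.IsInducedPath) (h : G.Adj v y)
    (hy : y ∉ p.support) (hyp : ∀ x ∈ p.support, G.Adj x y → x = v) :
    (p.concat h).IsInducedPath := by
  rw [← reverse_reverse (p.concat h), reverse_concat]
  exact (hp.reverse.cons h.symm (by simpa using hy)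
    fun x hx hyx => hyp x (by simpa using hx) hyx.symm).reverse

lemma IsInducedPath.cons_concat {p : G.Walk u v} (hp : p.IsInducedPath)
    (hxu : G.Adj x u) (hvy : G.Adj v y) (hx : x ∉ p.support) (hy : y ∉ p.support)
    (hxy : x ≠ y) (hnxy : ¬ G.Adj x y) (hxp : ∀ a ∈ p.support, G.Adj x a → a = u)
    (hyp : ∀ a ∈ p.support, G.Adj a y → a = v) :
    (Walk.cons hxu (p.concat hvy)).IsInducedPath := by
  refine (hp.concat hvy hy hyp).cons hxu (by simp [support_concat, hx, hxy]) fun a ha hxa => ?_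
  rw [support_concat, List.mem_append, List.mem_singleton] at ha
  rcases ha with ha | rfl
  · exact hxp a ha hxa
  · exact (hnxy hxa).elim

lemma mem_support_cons_concat {a : V} {p : G.Walk u v} (hxu : G.Adj x u) (hvy : G.Adj v y) :
    a ∈ (Walk.cons hxu (p.concat hvy)).support ↔ a = x ∨ a ∈ p.support ∨ a = y := by
  simp [support_concat]

lemma IsInducedPath.hasInducedCycle {p : G.Walk u v} (hp : p.IsInducedPath) (huv : u ≠ v)
    (hxu : G.Adj x u) (hvx : G.Adj v x) (hx : x ∉ p.support)
    (hxp : ∀ y ∈ p.support, G.Adj x y → y = u ∨ y = v) :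
    G.HasInducedCycle (p.length + 2) := by
  refine ⟨x, Walk.cons hxu (p.concat hvx), ?_, by simp, ?_⟩
  · refine cons_isCycle_iff _ _ |>.mpr ⟨hp.isPath.concat hx hvx, fun h => ?_⟩
    rw [edges_concat, List.concat_eq_append, List.mem_append, List.mem_singleton] at h
    rcases h with h | h
    · exact hx (p.fst_mem_support_of_mem_edges h)
    · rcases Sym2.eq_iff.mp h with ⟨rfl, -⟩ | ⟨-, rfl⟩
      · exact hx p.end_mem_support
      · exact huv rfl
  · rw [isInduced_toSubgraph, isChordless_iff_forall_mem_edges]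
    have hx' : ∀ y ∈ p.support, G.Adj x y → s(x, y) ∈ (Walk.cons hxu (p.concat hvx)).edges := by
      intro y hy hxy
      rcases hxp y hy hxy with rfl | rfl <;> simp [edges_concat, Sym2.eq_swap]
    intro a b ha hb hab
    simp only [support_cons, support_concat, List.mem_cons, List.mem_append,
      List.not_mem_nil, or_false] at ha hb
    rcases ha with rfl | ha | rfl <;> rcases hb with rfl | hb | rfl
    all_goals first
      | exact (hab.ne rfl).elim
      | exact hx' _ hb hab
      | (rw [Sym2.eq_swap]; exact hx' _ ha hab.symm)
      | simp [edges_concat, hp.isChordless.mem_edges ha hb hab]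

end Walk

lemma HasInducedCycle.exists_injective_adj_iff {n : ℕ} (h : G.HasInducedCycle n) :
    ∃ c : ZMod n → V, Function.Injective c ∧ ∀ i j, G.Adj (c i) (c j) ↔ j = i + 1 ∨ i = j + 1 := by
  obtain ⟨v, w, hcyc, rfl, hind⟩ := h
  have h3 := hcyc.three_le_length
  have : NeZero w.length := ⟨by omega⟩
  have hval : ∀ i : ZMod w.length, i.val < w.length := ZMod.val_lt
  have hsucc : ∀ i : ZMod w.length, w.getVert (i + 1).val = w.getVert (i.val + 1) := by
    intro i
    rw [ZMod.val_add, ZMod.val_one_eq_one_mod, Nat.mod_eq_of_lt (by omega : 1 < w.length)]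
    by_cases hlt : i.val + 1 < w.length
    · rw [Nat.mod_eq_of_lt hlt]
    · rw [show i.val + 1 = w.length by have := hval i; omega, Nat.mod_self, Walk.getVert_zero,
        Walk.getVert_length]
  have hcast : ∀ t < w.length, w.getVert t = w.getVert (t : ZMod w.length).val := fun t ht => by
    rw [ZMod.val_natCast, Nat.mod_eq_of_lt ht]
  have hinj : Function.Injective fun i : ZMod w.length => w.getVert i.val := fun i j h =>
    ZMod.val_injective _ (hcyc.getVert_injOn' (by simp; have := hval i; omega)
      (by simp; have := hval j; omega) h)
  refine ⟨fun i => w.getVert i.val, hinj, fun i j => ⟨fun hadj => ?_, ?_⟩⟩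
  · obtain ⟨t, ht, htlt⟩ := w.toSubgraph_adj_iff.mp <| hind
      (w.mem_verts_toSubgraph.mpr (w.getVert_mem_support _))
      (w.mem_verts_toSubgraph.mpr (w.getVert_mem_support _)) hadj
    have ht1 : w.getVert (t + 1) = w.getVert ((t : ZMod w.length) + 1).val := by
      rw [hsucc, ZMod.val_natCast, Nat.mod_eq_of_lt htlt]
    rw [ht1, hcast t htlt] at ht
    rcases Sym2.eq_iff.mp ht with ⟨h1, h2⟩ | ⟨h1, h2⟩
    · exact .inl (by rw [← hinj h1, ← hinj h2])
    · exact .inr (by rw [← hinj h1, ← hinj h2])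
  · rintro (rfl | rfl)
    · simpa [hsucc] using w.adj_getVert_succ (hval i)
    · simpa [hsucc] using (w.adj_getVert_succ (hval j)).symm

lemma exists_adj_adj_of_dist_eq_two {u v : V} (h : G.dist u v = 2) :
    u ≠ v ∧ ¬ G.Adj u v ∧ ∃ w, G.Adj u w ∧ G.Adj w v := by
  have hedist : G.edist u v = 2 := by
    rw [← (Reachable.of_dist_ne_zero (by omega)).coe_dist_eq_edist, h]; rfl
  obtain ⟨hne, hnadj, w, hw⟩ := edist_eq_two_iff.mp hedist
  rw [mem_commonNeighbors] at hw
  exact ⟨hne, hnadj, w, hw.1, hw.2.symm⟩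

variable {L : ℕ → Set V} {k i j : ℕ} {x y : V}

namespace IsLevelling

lemma ne_of_mem_s7 (hL : G.IsLevelling L k) (hi : i ≤ k) (hj : j ≤ k) (hij : i ≠ j)
    (hx : x ∈ L i) (hy : y ∈ L j) : x ≠ y := by
  rintro rfl
  exact Set.disjoint_left.mp (hL.1 i hi j hj hij) hx hy

lemma not_adj_of_mem (hL : G.IsLevelling L k) (hj : j ≤ k) (hij : i + 2 ≤ j)
    (hx : x ∈ L i) (hy : y ∈ L j) : ¬ G.Adj x y :=
  (hL.2.2 j (by omega) hj y hy).2 i hij x hx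

lemma exists_adj_of_mem (hL : G.IsLevelling L k) (hi : 1 ≤ i) (hik : i ≤ k) (hx : x ∈ L i) :
    ∃ y ∈ L (i - 1), G.Adj y x :=
  (hL.2.2 i hi hik x hx).1

lemma ne_of_mem_iUnion (hL : G.IsLevelling L k) (hij : i < j) (hx : x ∈ L i)
    (hy : y ∈ ⋃ t ∈ Set.Icc j k, L t) : x ≠ y := by
  obtain ⟨t, ⟨hjt, htk⟩, hyt⟩ := Set.mem_iUnion₂.mp hy
  exact hL.ne_of_mem_s7 (by omega) htk (by omega) hx hyt

lemma not_adj_of_mem_iUnion (hL : G.IsLevelling L k) (hij : i + 2 ≤ j) (hx : x ∈ L i)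
    (hy : y ∈ ⋃ t ∈ Set.Icc j k, L t) : ¬ G.Adj x y := by
  obtain ⟨t, ⟨hjt, htk⟩, hyt⟩ := Set.mem_iUnion₂.mp hy
  exact hL.not_adj_of_mem htk (by omega) hx hyt

lemma not_adj_of_five_le_egirth (hg : 5 ≤ G.egirth) (hL : G.IsLevelling L k)
    (hk : 1 ≤ k) {p x w y : V} (hp : p ∈ L (k - 1)) (hw : w ∈ L k) (hxy : x ≠ y)
    (hpx : G.Adj p x) (hxw : G.Adj x w) (hwy : G.Adj w y) : ¬ G.Adj p y := fun hpy =>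
  hL.ne_of_mem_s7 (by omega) le_rfl (by omega) hp hw
    (eq_of_five_le_egirth_s7 hg hxy hpx.symm hpy hxw hwy)

end IsLevelling

namespace IsStableLevelling

variable {u v pu pv r : V} {W : G.Walk u v}

lemma isInducedPath_cons_concat (hL : G.IsStableLevelling L k) (hi : 1 ≤ i)
    (hW : W.IsInducedPath) (hWL : ∀ x ∈ W.support, x ∈ ⋃ t ∈ Set.Icc i k, L t)
    (hpu : pu ∈ L (i - 1)) (hpv : pv ∈ L (i - 1)) (hne : pu ≠ pv)
    (hpu_u : G.Adj pu u) (hv_pv : G.Adj v pv)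
    (hpuW : ∀ y ∈ W.support, G.Adj pu y → y = u) (hpvW : ∀ y ∈ W.support, G.Adj y pv → y = v) :
    (Walk.cons hpu_u (W.concat hv_pv)).IsInducedPath := by
  obtain ⟨t, ⟨hit, htk⟩, -⟩ := Set.mem_iUnion₂.mp (hWL u W.start_mem_support)
  exact hW.cons_concat hpu_u hv_pv
    (fun h => hL.1.ne_of_mem_iUnion (by omega) hpu (hWL _ h) rfl)
    (fun h => hL.1.ne_of_mem_iUnion (by omega) hpv (hWL _ h) rfl)
    hne (hL.2 (i - 1) (by omega) _ hpu _ hpv) hpuW hpvW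

lemma hasInducedCycle_of_grandparent (hL : G.IsStableLevelling L k) (hi : 2 ≤ i)
    (hW : W.IsInducedPath) (hWL : ∀ x ∈ W.support, x ∈ ⋃ t ∈ Set.Icc i k, L t)
    (hpu : pu ∈ L (i - 1)) (hpv : pv ∈ L (i - 1)) (hr : r ∈ L (i - 2)) (hne : pu ≠ pv)
    (hpu_u : G.Adj pu u) (hv_pv : G.Adj v pv) (hr_pu : G.Adj r pu) (hpv_r : G.Adj pv r)
    (hpuW : ∀ y ∈ W.support, G.Adj pu y → y = u) (hpvW : ∀ y ∈ W.support, G.Adj y pv → y = v) :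
    G.HasInducedCycle (W.length + 4) := by
  obtain ⟨t, ⟨hit, htk⟩, -⟩ := Set.mem_iUnion₂.mp (hWL u W.start_mem_support)
  have hext := hL.isInducedPath_cons_concat (by omega) hW hWL hpu hpv hne hpu_u hv_pv hpuW hpvW
  have hr_ne : ∀ p ∈ L (i - 1), r ≠ p := fun p hp =>
    hL.1.ne_of_mem_s7 (by omega) (by omega) (by omega) hr hp
  have hcyc := hext.hasInducedCycle hne hr_pu hpv_r
    (by
      simp only [Walk.mem_support_cons_concat, not_or]
      exact ⟨hr_ne pu hpu, fun h => hL.1.ne_of_mem_iUnion (by omega) hr (hWL _ h) rfl,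
        hr_ne pv hpv⟩)
    (by
      intro y hy hry
      rw [Walk.mem_support_cons_concat] at hy
      rcases hy with rfl | hy | rfl
      · exact .inl rfl
      · exact (hL.1.not_adj_of_mem_iUnion (by omega) hr (hWL _ hy) hry).elim
      · exact .inr rfl)
  simpa [add_assoc] using hcyc

lemma exists_adj_adj_of_isInducedPath
    (hodd : ∀ n : ℕ, Odd n → 9 ≤ n → ¬ G.HasInducedCycle n) (hL : G.IsStableLevelling L k)
    (hi : 1 ≤ i) (hik : i ≤ k) (hW : W.IsInducedPath) (hu : u ∈ L i) (hv : v ∈ L i)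
    (hWL : ∀ x ∈ W.support, x = u ∨ x = v ∨ x ∈ ⋃ t ∈ Set.Icc (i + 1) k, L t)
    (hlen : Odd W.length) (h5 : 5 ≤ W.length) :
    ∃ r ∈ L (i - 1), G.Adj r u ∧ G.Adj r v := by
  induction i, hi using Nat.le_induction generalizing u v W with
  | base =>
    obtain ⟨pu, hpu, hpu_u⟩ := hL.1.exists_adj_of_mem le_rfl hik hu
    obtain ⟨pv, hpv, hpv_v⟩ := hL.1.exists_adj_of_mem le_rfl hik hv
    obtain ⟨v₀, h₀⟩ := hL.1.2.1
    rw [Nat.sub_self, h₀, Set.mem_singleton_iff] at hpu hpv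
    exact ⟨v₀, by simp [h₀], hpu ▸ hpu_u, hpv ▸ hpv_v⟩
  | succ i hi ih =>
    obtain ⟨pu, hpu, hpu_u⟩ := hL.1.exists_adj_of_mem (by omega) hik hu
    obtain ⟨pv, hpv, hpv_v⟩ := hL.1.exists_adj_of_mem (by omega) hik hv
    rw [Nat.add_sub_cancel] at hpu hpv ⊢
    by_contra! hno
    have hpuW : ∀ y ∈ W.support, G.Adj pu y → y = u := by
      intro y hy hadj
      rcases hWL y hy with rfl | rfl | hy
      · rfl
      · exact (hno pu hpu hpu_u hadj).elim
      · exact (hL.1.not_adj_of_mem_iUnion (by omega) hpu hy hadj).elim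
    have hpvW : ∀ y ∈ W.support, G.Adj y pv → y = v := by
      intro y hy hadj
      rcases hWL y hy with rfl | rfl | hy
      · exact (hno pv hpv hadj.symm hpv_v).elim
      · rfl
      · exact (hL.1.not_adj_of_mem_iUnion (by omega) hpv hy hadj.symm).elim
    have hWL' : ∀ x ∈ W.support, x ∈ ⋃ t ∈ Set.Icc (i + 1) k, L t := by
      intro x hx
      rcases hWL x hx with rfl | rfl | hx
      · exact Set.mem_biUnion ⟨le_rfl, hik⟩ hu
      · exact Set.mem_biUnion ⟨le_rfl, hik⟩ hv
      · exact Set.biUnion_mono (Set.Icc_subset_Icc_left (by omega)) (fun _ _ => le_rfl) hx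
    have hne : pu ≠ pv := fun h => hno pu hpu hpu_u (h ▸ hpv_v)
    have hext := hL.isInducedPath_cons_concat (i := i + 1) (by omega) hW hWL' (by simpa using hpu)
      (by simpa using hpv) hne hpu_u hpv_v.symm hpuW hpvW
    obtain ⟨r, hr, hr_pu, hr_pv⟩ := ih (by omega) hext hpu hpv
      (by
        intro x hx
        rw [Walk.mem_support_cons_concat] at hx
        rcases hx with rfl | hx | rfl
        · exact .inl rfl
        · exact .inr (.inr (hWL' x hx))
        · exact .inr (.inl rfl))
      (by simpa [add_assoc] using hlen.add_even even_two) (by simp; omega)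
    have hcyc := hL.hasInducedCycle_of_grandparent (i := i + 1) (by omega) hW hWL'
      (by simpa using hpu) (by simpa using hpv) (by rwa [show i + 1 - 2 = i - 1 by omega])
      hne hpu_u hpv_v.symm hr_pu hr_pv.symm hpuW hpvW
    exact hodd _ (hlen.add_even (by decide)) (by omega) hcyc

end IsStableLevelling

/-- An `n`-hole `c` of `H[N²(z)]`, read in `G` and indexed by `ZMod n`, together with a choice of
common neighbours `m i` of `z` and `c i`. -/
structure IsCycleAtDistTwo {n : ℕ} (G : SimpleGraph V) (z : V) (c m : ZMod n → V) : Prop where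
  adj_iff : ∀ i j, G.Adj (c i) (c j) ↔ j = i + 1 ∨ i = j + 1
  injective : Function.Injective c
  adj_center : ∀ i, G.Adj z (m i)
  adj_spoke : ∀ i, G.Adj (m i) (c i)
  not_adj_center : ∀ i, ¬ G.Adj z (c i)
  ne_center : ∀ i, z ≠ c i

lemma exists_isCycleAtDistTwo {S : Set V} {z : S} {n : ℕ}
    (h : ((G.induce S).induce {w : S | (G.induce S).dist z w = 2}).HasInducedCycle n) :
    ∃ c m : ZMod n → V, G.IsCycleAtDistTwo z c m ∧ (∀ i, c i ∈ S) ∧ ∀ i, m i ∈ S := by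
  obtain ⟨c, hinj, hadj⟩ := h.exists_injective_adj_iff
  choose hne hnadj m hzm hmc using fun i => exists_adj_adj_of_dist_eq_two (c i).2
  refine ⟨fun i => c i, fun i => m i, ⟨fun i j => hadj i j, ?_, hzm, hmc, hnadj, ?_⟩,
    fun i => (c i).1.2, fun i => (m i).2⟩
  · exact fun i j h => hinj (Subtype.val_injective (Subtype.val_injective h))
  · exact fun i h => hne i (Subtype.val_injective h)

namespace IsCycleAtDistTwo

variable {n : ℕ} {z : V} {c m : ZMod n → V}

lemma rotate (hC : G.IsCycleAtDistTwo z c m) (j : ZMod n) :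
    G.IsCycleAtDistTwo z (fun i => c (i + j)) (fun i => m (i + j)) where
  adj_iff i i' := by simp only [hC.adj_iff, add_right_comm _ j, add_left_inj]
  injective := hC.injective.comp (add_left_injective j)
  adj_center i := hC.adj_center _
  adj_spoke i := hC.adj_spoke _
  not_adj_center i := hC.not_adj_center _
  ne_center i := hC.ne_center _

lemma reflect (hC : G.IsCycleAtDistTwo z c m) :
    G.IsCycleAtDistTwo z (fun i => c (-i)) (fun i => m (-i)) where
  adj_iff i i' := by
    rw [hC.adj_iff, or_comm]
    constructor <;> rintro (h | h)
    all_goals first | (left; linear_combination h) | (right; linear_combination h)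
  injective := hC.injective.comp neg_injective
  adj_center i := hC.adj_center _
  adj_spoke i := hC.adj_spoke _
  not_adj_center i := hC.not_adj_center _
  ne_center i := hC.ne_center _

lemma adj_succ (hC : G.IsCycleAtDistTwo z c m) (i : ZMod n) : G.Adj (c i) (c (i + 1)) :=
  (hC.adj_iff _ _).2 (.inl rfl)

lemma spoke_ne (hC : G.IsCycleAtDistTwo z c m) (i j : ZMod n) : m i ≠ c j := fun h =>
  hC.not_adj_center j (h ▸ hC.adj_center i)

lemma eq_of_adj (hg : 5 ≤ G.egirth) (hC : G.IsCycleAtDistTwo z c m) {i j : ZMod n}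
    (h : G.Adj (m i) (c j)) : m i = m j := by
  by_contra hne
  exact hC.ne_center j <| eq_of_five_le_egirth_s7 hg hne (hC.adj_center i).symm (hC.adj_center j) h
    (hC.adj_spoke j).symm

lemma two_le (hg : 5 ≤ G.egirth) (hL : G.IsLevelling L k) (hC : G.IsCycleAtDistTwo z c m)
    (hz : z ∈ L k) (hc : ∀ i, c i ∈ L k) (hm : ∀ i, m i ∈ L k) : 2 ≤ k := by
  obtain ⟨v₀, h₀⟩ := hL.2.1
  by_contra! hk
  interval_cases k
  · rw [h₀] at hz hc
    exact hC.ne_center 0 (hz.trans (hc 0).symm)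
  · obtain ⟨p, hp, hpz⟩ := hL.exists_adj_of_mem le_rfl le_rfl hz
    obtain ⟨q, hq, hqc⟩ := hL.exists_adj_of_mem le_rfl le_rfl (hc 0)
    rw [Nat.sub_self, h₀, Set.mem_singleton_iff] at hp hq
    subst hp hq
    exact hL.not_adj_of_five_le_egirth hg le_rfl (by simp [h₀]) (hm 0) (hC.ne_center 0) hpz
      (hC.adj_center 0) (hC.adj_spoke 0) hqc

lemma not_adj_of_adj_center (hg : 5 ≤ G.egirth) (hL : G.IsLevelling L k)
    (hC : G.IsCycleAtDistTwo z c m) (hk : 1 ≤ k) (hm : ∀ i, m i ∈ L k) {p : V}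
    (hp : p ∈ L (k - 1)) (hpz : G.Adj p z) :
    (∀ i, ¬ G.Adj p (m i)) ∧ ∀ i, ¬ G.Adj p (c i) :=
  ⟨fun i => not_adj_of_five_le_egirth hg hpz (hC.adj_center i),
    fun i => hL.not_adj_of_five_le_egirth hg hk hp (hm i) (hC.ne_center i) hpz (hC.adj_center i)
      (hC.adj_spoke i)⟩

lemma not_adj_center_of_adj (hg : 5 ≤ G.egirth) (hL : G.IsLevelling L k)
    (hC : G.IsCycleAtDistTwo z c m) (hk : 1 ≤ k) (hm : ∀ i, m i ∈ L k) {q : V} {i : ZMod n}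
    (hq : q ∈ L (k - 1)) (hqc : G.Adj q (c i)) : ¬ G.Adj q z :=
  hL.not_adj_of_five_le_egirth hg hk hq (hm i) (hC.ne_center i).symm hqc (hC.adj_spoke i).symm
    (hC.adj_center i).symm

lemma exists_grandparent (hg : 5 ≤ G.egirth)
    (hodd : ∀ n : ℕ, Odd n → 9 ≤ n → ¬ G.HasInducedCycle n) (hL : G.IsStableLevelling L k)
    (hC : G.IsCycleAtDistTwo z c m) (hk : 2 ≤ k) (hz : z ∈ L k) (hc : ∀ i, c i ∈ L k)
    (hm : ∀ i, m i ∈ L k) {p q : V} (hp : p ∈ L (k - 1)) (hq : q ∈ L (k - 1))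
    (hpz : G.Adj p z) (hqc : G.Adj q (c 0)) :
    ∃ r ∈ L (k - 2), G.Adj r p ∧ G.Adj r q := by
  have h10 : G.Adj (c 1) (c 0) := by simpa using (hC.adj_succ 0).symm
  have hm1c0 : ¬ G.Adj (m 1) (c 0) := not_adj_of_five_le_egirth hg (hC.adj_spoke 1) h10
  let W : G.Walk z (c 0) := .cons (hC.adj_center 1) (.cons (hC.adj_spoke 1) (.cons h10 .nil))
  have hW : W.IsInducedPath :=
    ((Walk.IsInducedPath.nil.cons h10 (by simp [h10.ne]) (by simp)).cons (hC.adj_spoke 1)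
      (by simp [hC.spoke_ne]) (by simp [hm1c0])).cons (hC.adj_center 1)
      (by simp [(hC.adj_center 1).ne, hC.ne_center]) (by simp [hC.not_adj_center])
  have hWL : ∀ x ∈ W.support, x ∈ L k := by simp [W, hz, hc, hm]
  obtain ⟨hpm, hpc⟩ := hC.not_adj_of_adj_center hg hL.1 (by omega) hm hp hpz
  have hqz := hC.not_adj_center_of_adj hg hL.1 (by omega) hm hq hqc
  have hqm1 : ¬ G.Adj q (m 1) := hL.1.not_adj_of_five_le_egirth hg (by omega) hq (hc 1)
    (hC.spoke_ne 1 0).symm hqc h10.symm (hC.adj_spoke 1).symm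
  have hqc1 : ¬ G.Adj q (c 1) := not_adj_of_five_le_egirth hg hqc h10.symm
  have hext := hL.isInducedPath_cons_concat (i := k) (by omega) hW
    (fun x hx => Set.mem_biUnion ⟨le_rfl, le_rfl⟩ (hWL x hx)) hp hq (fun h => hpc 0 (h ▸ hqc))
    hpz hqc.symm (by simp [W, hpm, hpc]) (by simp [W, G.adj_comm _ q, hqz, hqm1, hqc1])
  obtain ⟨r, hr, hrp, hrq⟩ := hL.exists_adj_adj_of_isInducedPath hodd (i := k - 1) (by omega)
    (by omega) hext hp hq
    (fun x hx => by
      rw [Walk.mem_support_cons_concat] at hx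
      rcases hx with rfl | hx | rfl
      · exact .inl rfl
      · exact .inr (.inr (Set.mem_biUnion (x := k) ⟨by omega, le_rfl⟩ (hWL x hx)))
      · exact .inr (.inl rfl))
    (by simp [W]; decide) (by simp [W])
  exact ⟨r, by rwa [show k - 2 = k - 1 - 1 by omega], hrp, hrq⟩

lemma exists_isInducedPath_of_not_adj (hg : 5 ≤ G.egirth) (hC : G.IsCycleAtDistTwo z c m)
    (hn : 4 ≤ n) (h0 : ¬ G.Adj (m 3) (c 0)) :
    ∃ W : G.Walk z (c 0), W.IsInducedPath ∧ W.length = 5 ∧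
      W.support = [z, m 3, c 3, c 2, c 1, c 0] := by
  have hc_ne : ∀ a b : ℕ, a < 4 → b < 4 → a ≠ b → c a ≠ c b := fun a b ha hb hab h =>
    ZMod.natCast_ne_natCast_of_lt (by omega) (by omega) hab (hC.injective h)
  have h31 : c 3 ≠ c 1 := by simpa using hc_ne 3 1 (by norm_num) (by norm_num) (by norm_num)
  have h30 : c 3 ≠ c 0 := by simpa using hc_ne 3 0 (by norm_num) (by norm_num) (by norm_num)
  have h20 : c 2 ≠ c 0 := by simpa using hc_ne 2 0 (by norm_num) (by norm_num) (by norm_num)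
  have a32 : G.Adj (c 3) (c 2) := (hC.adj_iff _ _).2 (.inr (by norm_num))
  have a21 : G.Adj (c 2) (c 1) := (hC.adj_iff _ _).2 (.inr (by norm_num))
  have a10 : G.Adj (c 1) (c 0) := (hC.adj_iff _ _).2 (.inr (by norm_num))
  have n31 : ¬ G.Adj (c 3) (c 1) := not_adj_of_five_le_egirth hg a32 a21
  have n20 : ¬ G.Adj (c 2) (c 0) := not_adj_of_five_le_egirth hg a21 a10
  have n30 : ¬ G.Adj (c 3) (c 0) := fun h =>
    h31 (eq_of_five_le_egirth_s7 hg h20.symm a10.symm a21.symm h.symm a32).symm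
  have h2 : ¬ G.Adj (m 3) (c 2) := not_adj_of_five_le_egirth hg (hC.adj_spoke 3) a32
  have h1 : ¬ G.Adj (m 3) (c 1) := fun h =>
    hC.spoke_ne 3 2 (eq_of_five_le_egirth_s7 hg h31 (hC.adj_spoke 3).symm h a32 a21)
  refine ⟨.cons (hC.adj_center 3) (.cons (hC.adj_spoke 3) (.cons a32 (.cons a21 (.cons a10 .nil)))),
    ?_, rfl, rfl⟩
  exact ((((Walk.IsInducedPath.nil.cons a10 (by simp [a10.ne]) (by simp)).cons a21
    (by simp [a21.ne, h20]) (by simp [n20])).cons a32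
    (by simp [a32.ne, h31, h30]) (by simp [n31, n30])).cons (hC.adj_spoke 3)
    (by simp [hC.spoke_ne]) (by simp [h0, h1, h2])).cons (hC.adj_center 3)
    (by simp [(hC.adj_center 3).ne, hC.ne_center]) (by simp [hC.not_adj_center])

lemma adj_or_adj_of_grandparent (hg : 5 ≤ G.egirth)
    (hodd : ∀ n : ℕ, Odd n → 9 ≤ n → ¬ G.HasInducedCycle n) (hL : G.IsStableLevelling L k)
    (hC : G.IsCycleAtDistTwo z c m) (hn : 4 ≤ n) (hk : 2 ≤ k) (hz : z ∈ L k)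
    (hc : ∀ i, c i ∈ L k) (hm : ∀ i, m i ∈ L k) {p q r : V} (hp : p ∈ L (k - 1))
    (hq : q ∈ L (k - 1)) (hr : r ∈ L (k - 2)) (hpz : G.Adj p z) (hqc : G.Adj q (c 0))
    (hrp : G.Adj r p) (hrq : G.Adj r q) (h0 : ¬ G.Adj (m 3) (c 0)) :
    G.Adj q (m 3) ∨ G.Adj q (c 3) := by
  by_contra! ⟨hqm3, hqc3⟩
  obtain ⟨W, hW, hlen, hsupp⟩ := hC.exists_isInducedPath_of_not_adj hg hn h0
  have hWL : ∀ x ∈ W.support, x ∈ L k := by simp [hsupp, hz, hc, hm]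
  have h20 : c 2 ≠ c 0 := fun h => ZMod.natCast_ne_natCast_of_lt (n := n) (a := 2) (b := 0)
    (by omega) (by omega) (by norm_num) (by simpa using hC.injective h)
  have a10 : G.Adj (c 1) (c 0) := (hC.adj_iff _ _).2 (.inr (by norm_num))
  have a21 : G.Adj (c 2) (c 1) := (hC.adj_iff _ _).2 (.inr (by norm_num))
  obtain ⟨hpm, hpc⟩ := hC.not_adj_of_adj_center hg hL.1 (by omega) hm hp hpz
  have hqz := hC.not_adj_center_of_adj hg hL.1 (by omega) hm hq hqc
  have hqc2 : ¬ G.Adj q (c 2) :=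
    hL.1.not_adj_of_five_le_egirth hg (by omega) hq (hc 1) h20.symm hqc a10.symm a21.symm
  have hqc1 : ¬ G.Adj q (c 1) := not_adj_of_five_le_egirth hg hqc a10.symm
  have hcyc := hL.hasInducedCycle_of_grandparent hk hW
    (fun x hx => Set.mem_biUnion ⟨le_rfl, le_rfl⟩ (hWL x hx)) hp hq hr
    (fun h => hpc 0 (h ▸ hqc)) hpz hqc.symm hrp hrq.symm (by simp [hsupp, hpm, hpc])
    (by simp [hsupp, G.adj_comm _ q, hqz, hqm3, hqc3, hqc2, hqc1])
  rw [hlen] at hcyc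
  exact hodd 9 (by decide) le_rfl hcyc

lemma false_of_five (hg : 5 ≤ G.egirth)
    (hodd : ∀ n : ℕ, Odd n → 9 ≤ n → ¬ G.HasInducedCycle n) (hL : G.IsStableLevelling L k)
    {c m : ZMod 5 → V} (hC : G.IsCycleAtDistTwo z c m) (hz : z ∈ L k) (hc : ∀ i, c i ∈ L k)
    (hm : ∀ i, m i ∈ L k) : False := by
  have hk := hC.two_le hg hL.1 hz hc hm
  obtain ⟨p, hp, hpz⟩ := hL.1.exists_adj_of_mem (by omega) le_rfl hz
  obtain ⟨q, hq, hqc⟩ := hL.1.exists_adj_of_mem (by omega) le_rfl (hc 0)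
  obtain ⟨r, hr, hrp, hrq⟩ := hC.exists_grandparent hg hodd hL hk hz hc hm hp hq hpz hqc
  have hqm3 : ∀ {c m : ZMod 5 → V}, G.IsCycleAtDistTwo z c m → (∀ i, c i ∈ L k) →
      (∀ i, m i ∈ L k) → G.Adj q (c 0) → G.Adj q (m 3) := by
    intro c m hC hc hm hqc
    have a34 : G.Adj (c 3) (c 4) := (hC.adj_iff _ _).2 (by decide)
    have a40 : G.Adj (c 4) (c 0) := (hC.adj_iff _ _).2 (by decide)
    have h30 : c 3 ≠ c 0 := hC.injective.ne (by decide)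
    refine (hC.adj_or_adj_of_grandparent hg hodd hL (by norm_num) hk hz hc hm hp hq hr hpz hqc
      hrp hrq fun h => hC.spoke_ne 3 4 ?_).resolve_right ?_
    · exact eq_of_five_le_egirth_s7 hg h30 (hC.adj_spoke 3).symm h a34 a40
    · exact hL.1.not_adj_of_five_le_egirth hg (by omega) hq (hc 4) h30.symm hqc a40.symm a34.symm
  have h3 := hqm3 hC hc hm hqc
  have h2 : G.Adj q (m 2) := hqm3 hC.reflect (fun i => hc _) (fun i => hm _) (by simpa using hqc)
  have hm23 : m 2 = m 3 := by
    by_contra hne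
    exact hL.1.ne_of_mem_s7 (by omega) le_rfl (by omega) hq hz <|
      eq_of_five_le_egirth_s7 hg hne h2.symm h3 (hC.adj_center 2).symm (hC.adj_center 3)
  exact not_adj_of_five_le_egirth hg (hC.adj_spoke 3) ((hC.adj_iff 3 2).2 (by decide))
    (hm23 ▸ hC.adj_spoke 2)

lemma adj_three_or_adj_four (hg : 5 ≤ G.egirth)
    (hodd : ∀ n : ℕ, Odd n → 9 ≤ n → ¬ G.HasInducedCycle n) (hL : G.IsStableLevelling L k)
    {c m : ZMod 7 → V} (hC : G.IsCycleAtDistTwo z c m) (hz : z ∈ L k) (hc : ∀ i, c i ∈ L k)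
    (hm : ∀ i, m i ∈ L k) : G.Adj (m 3) (c 0) ∨ G.Adj (m 4) (c 0) := by
  by_contra! ⟨h3, h4⟩
  have hk := hC.two_le hg hL.1 hz hc hm
  obtain ⟨p, hp, hpz⟩ := hL.1.exists_adj_of_mem (by omega) le_rfl hz
  obtain ⟨q, hq, hqc⟩ := hL.1.exists_adj_of_mem (by omega) le_rfl (hc 0)
  obtain ⟨r, hr, hrp, hrq⟩ := hC.exists_grandparent hg hodd hL hk hz hc hm hp hq hpz hqc
  have hq3 := hC.adj_or_adj_of_grandparent hg hodd hL (by norm_num) hk hz hc hm hp hq hr hpz hqc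
    hrp hrq h3
  have hq4 : G.Adj q (m 4) ∨ G.Adj q (c 4) :=
    hC.reflect.adj_or_adj_of_grandparent hg hodd hL (by norm_num) hk hz (fun i => hc _)
      (fun i => hm _) hp hq hr hpz (by simpa using hqc) hrp hrq h4
  have a34 : G.Adj (c 3) (c 4) := (hC.adj_iff _ _).2 (by decide)
  have hqz : q ≠ z := hL.1.ne_of_mem_s7 (by omega) le_rfl (by omega) hq hz
  rcases hq3 with hq3 | hq3 <;> rcases hq4 with hq4 | hq4
  · refine hqz (eq_of_five_le_egirth_s7 hg (fun h => ?_) hq3.symm hq4 (hC.adj_center 3).symm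
      (hC.adj_center 4))
    exact not_adj_of_five_le_egirth hg (hC.adj_spoke 3) a34 (h ▸ hC.adj_spoke 4)
  · exact hL.1.not_adj_of_five_le_egirth hg (by omega) hq (hc 3) (hC.spoke_ne 3 4) hq3
      (hC.adj_spoke 3) a34 hq4
  · exact hL.1.not_adj_of_five_le_egirth hg (by omega) hq (hc 4) (hC.spoke_ne 4 3).symm hq3
      a34 (hC.adj_spoke 4).symm hq4
  · exact not_adj_of_five_le_egirth hg hq3 a34 hq4

lemma false_of_seven (hg : 5 ≤ G.egirth)
    (hodd : ∀ n : ℕ, Odd n → 9 ≤ n → ¬ G.HasInducedCycle n) (hL : G.IsStableLevelling L k)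
    {c m : ZMod 7 → V} (hC : G.IsCycleAtDistTwo z c m) (hz : z ∈ L k) (hc : ∀ i, c i ∈ L k)
    (hm : ∀ i, m i ∈ L k) : False := by
  have hpair : ∀ j, m j = m (j + 3) ∨ m (j + 4) = m j := fun j => by
    rcases (hC.rotate j).adj_three_or_adj_four hg hodd hL hz (fun i => hc _) (fun i => hm _)
      with h | h
    · exact .inl (by simpa [add_comm] using (hC.eq_of_adj hg h).symm)
    · exact .inr (by simpa [add_comm] using hC.eq_of_adj hg h)
  have hnot : ∀ j, ¬ (m j = m (j + 3) ∧ m (j + 4) = m j) := by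
    rintro j ⟨h3, h4⟩
    have a34 : G.Adj (c (j + 3)) (c (j + 4)) := by convert hC.adj_succ (j + 3) using 2; ring
    refine not_adj_of_five_le_egirth hg (a := m j) ?_ a34 ?_
    · rw [h3]; exact hC.adj_spoke _
    · rw [← h4]; exact hC.adj_spoke _
  have e : ∀ j : ZMod 7, j + 4 + 3 = j := by decide
  refine ZMod.not_forall_iff_not_add_four (fun j => m j = m (j + 3)) fun j => ?_
  simp only [e]
  exact ⟨fun h3 h4 => hnot j ⟨h3, h4⟩, (hpair j).resolve_right⟩

end IsCycleAtDistTwo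

end SimpleGraph

theorem stmt_7_general {V : Type*} (G : SimpleGraph V)
    (hgirth : (5 : ℕ∞) ≤ G.egirth)
    (hodd : ∀ n : ℕ, Odd n → 9 ≤ n → ¬ G.HasInducedCycle n)
    (L : ℕ → Set V) (k : ℕ) (hL : G.IsStableLevelling L k)
    (S : Set V) (hS : S ⊆ L k) (z : ↥S) :
    ¬ ((G.induce S).induce {w : ↥S | (G.induce S).dist z w = 2}).HasInducedCycle 5 ∧
      ¬ ((G.induce S).induce {w : ↥S | (G.induce S).dist z w = 2}).HasInducedCycle 7 := by
  constructor
  · intro h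
    obtain ⟨c, m, hC, hcS, hmS⟩ := exists_isCycleAtDistTwo h
    exact hC.false_of_five hgirth hodd hL (hS z.2) (fun i => hS (hcS i)) (fun i => hS (hmS i))
  · intro h
    obtain ⟨c, m, hC, hcS, hmS⟩ := exists_isCycleAtDistTwo h
    exact hC.false_of_seven hgirth hodd hL (hS z.2) (fun i => hS (hcS i)) (fun i => hS (hmS i))

/-- If `(L 0, …, L k)` is a stable levelling of a graph `G` of girth at least 5 with no odd
hole of length at least 9, and `H` is an induced subgraph of `G[L k]`, then for every
`z ∈ V(H)` the subgraph of `H` induced on the vertices at distance exactly 2 from `z` in `H`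
contains no 5-hole and no 7-hole. -/
theorem stmt_7 {V : Type*} [Fintype V] (G : SimpleGraph V)
    (hgirth : (5 : ℕ∞) ≤ G.egirth)
    (hodd : ∀ n : ℕ, Odd n → 9 ≤ n → ¬ G.HasInducedCycle n)
    (L : ℕ → Set V) (k : ℕ) (hL : G.IsStableLevelling L k)
    (S : Set V) (hS : S ⊆ L k) (z : ↥S) :
    ¬ ((G.induce S).induce {w : ↥S | (G.induce S).dist z w = 2}).HasInducedCycle 5 ∧
      ¬ ((G.induce S).induce {w : ↥S | (G.induce S).dist z w = 2}).HasInducedCycle 7 :=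
  stmt_7_general G hgirth hodd L k hL S hS z
end

section
/- Let h, κ ≥ 0 be integers, and let G be a simple graph such that χ(G[N^2(v)]) ≤ κ for every vertex v, where N^2(v) is the set of vertices at distance exactly 2 from v. Let (C, T) be a lollipop in G with χ(G[C]) > hκ. Then there is a licking (C', T') of (C, T) whose cleanliness is at least h more than the cleanliness of (C, T), and such that χ(G[C']) ≥ χ(G[C]) − hκ. -/
/-
Induction on `h`; one step trades `κ` colours for one more clean vertex. Let `t` be the vertex of
`T` of index `cleanliness`, the first one at distance at most `2` from `C`; it is neither in `C`
nor adjacent to `C`. Removing `N²(t)` from `C` costs at most `κ` colours, and some connected piece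
`K` of the rest keeps its chromatic number, so `t` is at distance at least `3` from `K`. Extend `T`
by a shortest walk from its last vertex through `C` to a neighbour of `K`: by minimality this walk
is an induced path avoiding `K` whose only vertex with a neighbour in `K` is its end, so `(K, T')`
is a licking in which `t` has become clean.
-/

open SimpleGraph

/-- A lollipop `(C, T)` in `G`: an induced path `T` on at least two vertices, vertex-disjoint
from `C`, with `G[C]` connected, the last vertex of `T` having a neighbour in `C`, and all
other vertices of `T` anticomplete to `C`. -/
structure SimpleGraph.Lollipop {V : Type*} (G : SimpleGraph V) where
  C : Set V
  first : V
  last : V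
  T : G.Walk first last
  path : T.IsPath
  induced : T.toSubgraph.IsInduced
  len_pos : 1 ≤ T.length
  disj : ∀ v ∈ T.support, v ∉ C
  connC : (G.induce C).Connected
  last_adj : ∃ c ∈ C, G.Adj last c
  anti : ∀ v ∈ T.support, v ≠ last → ∀ c ∈ C, ¬ G.Adj v c

/-- The cleanliness of a lollipop: the maximum `c` such that the first `c` vertices of `T`
all have distance at least 3 (in `G`) from `C`. -/
noncomputable def SimpleGraph.Lollipop.cleanliness {V : Type*} {G : SimpleGraph V}
    (P : G.Lollipop) : ℕ :=
  sSup {c : ℕ | ∀ v ∈ P.T.support.take c, ∀ x ∈ P.C, ∀ w : G.Walk v x, 3 ≤ w.length}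

/-- `(C', T')` is a licking of `(C, T)`: `C' ⊆ C`, they have the same end, `T` is an initial
subpath of `T'`, and `V(T') ⊆ V(T) ∪ C`. -/
def SimpleGraph.Lollipop.IsLicking {V : Type*} {G : SimpleGraph V}
    (P' P : G.Lollipop) : Prop :=
  P'.C ⊆ P.C ∧ P'.first = P.first ∧ P.T.support <+: P'.T.support ∧
    ∀ v ∈ P'.T.support, v ∈ P.T.support ∨ v ∈ P.C

namespace SimpleGraph

variable {V : Type*} {G : SimpleGraph V}

lemma chromaticNumber_induce_le_add {s A B : Set V} (hs : s ⊆ A ∪ B) :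
    (G.induce s).chromaticNumber ≤
      (G.induce A).chromaticNumber + (G.induce B).chromaticNumber := by
  classical
  rcases eq_or_ne (G.induce A).chromaticNumber ⊤ with hA | hA
  · simp [hA]
  rcases eq_or_ne (G.induce B).chromaticNumber ⊤ with hB | hB
  · simp [hB]
  obtain ⟨cA⟩ := colorable_of_chromaticNumber_ne_top hA
  obtain ⟨cB⟩ := colorable_of_chromaticNumber_ne_top hB
  let c : (G.induce s).Coloring (Fin _ ⊕ Fin _) := Coloring.mk
    (fun v => if h : v.1 ∈ A then .inl (cA ⟨v, h⟩) else .inr (cB ⟨v, (hs v.2).resolve_left h⟩))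
    (by
      rintro ⟨x, hx⟩ ⟨y, hy⟩ (hxy : G.Adj x y)
      dsimp only
      split_ifs
      · exact fun h => cA.valid (v := ⟨x, _⟩) (w := ⟨y, _⟩) hxy (Sum.inl_injective h)
      · exact Sum.inl_ne_inr
      · exact Sum.inr_ne_inl
      · exact fun h => cB.valid (v := ⟨x, _⟩) (w := ⟨y, _⟩) hxy (Sum.inr_injective h))
  calc (G.induce s).chromaticNumber ≤ _ := c.colorable.chromaticNumber_le
    _ = _ := by simp [ENat.natCast_toNat hA, ENat.natCast_toNat hB]

lemma exists_connectedComponent_chromaticNumber_le {W : Type*} {H : SimpleGraph W} [Nonempty W]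
    (hH : H.chromaticNumber ≠ ⊤) :
    ∃ c : H.ConnectedComponent, H.chromaticNumber ≤ c.toSimpleGraph.chromaticNumber := by
  by_contra! hlt
  obtain ⟨n, hn⟩ := ENat.ne_top_iff_exists.1 hH
  obtain ⟨m, rfl⟩ : ∃ m, n = m + 1 := Nat.exists_eq_add_one.2 <| Nat.pos_of_ne_zero fun h => by
    simp [h, eq_comm (a := (0 : ℕ∞))] at hn
  have : H.Colorable m := colorable_iff_forall_connectedComponent.2 fun c => by
    rw [← chromaticNumber_le_iff_colorable, ← ENat.lt_add_one_iff (ENat.natCast_ne_top m)]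
    simpa [← hn] using hlt c
  have := this.chromaticNumber_le
  rw [← hn, Nat.cast_add_one] at this
  exact this.not_gt ((ENat.lt_add_one_iff (ENat.natCast_ne_top m)).2 le_rfl)

lemma exists_connected_induce_chromaticNumber_le {A : Set V} (hA : A.Nonempty)
    (hχ : (G.induce A).chromaticNumber ≠ ⊤) :
    ∃ K ⊆ A, (G.induce K).Connected ∧
      (G.induce A).chromaticNumber ≤ (G.induce K).chromaticNumber := by
  have := hA.to_subtype
  obtain ⟨c, hc⟩ := exists_connectedComponent_chromaticNumber_le hχ
  let e : c.toSimpleGraph ↪g G := (Embedding.induce A).comp (Embedding.induce c.supp)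
  refine ⟨Set.range e, ?_, ?_, ?_⟩
  · rintro _ ⟨x, rfl⟩
    exact x.1.2
  · exact e.isoInduceRange.connected_iff.1 c.connected_toSimpleGraph
  · rwa [← chromaticNumber_congr e.isoInduceRange]

lemma tsub_le_chromaticNumber_induce_sdiff {s D : Set V} {κ : ℕ∞}
    (hD : (G.induce D).chromaticNumber ≤ κ) :
    (G.induce s).chromaticNumber - κ ≤ (G.induce (s \ D)).chromaticNumber := by
  rw [tsub_le_iff_right]
  calc (G.induce s).chromaticNumber
      ≤ (G.induce (s \ D)).chromaticNumber + (G.induce D).chromaticNumber :=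
        chromaticNumber_induce_le_add fun x hx => by by_cases h : x ∈ D <;> simp [h, hx]
    _ ≤ (G.induce (s \ D)).chromaticNumber + κ := by gcongr

lemma chromaticNumber_ne_top_of_finite [Finite V] : G.chromaticNumber ≠ ⊤ :=
  chromaticNumber_ne_top_iff_exists.2 ⟨_, G.colorable_chromaticNumber_of_fintype⟩

lemma Connected.exists_walk_support_subset {s : Set V} (hs : (G.induce s).Connected) {a b : V}
    (ha : a ∈ s) (hb : b ∈ s) : ∃ w : G.Walk a b, ∀ y ∈ w.support, y ∈ s := by
  obtain ⟨q⟩ := hs.preconnected ⟨a, ha⟩ ⟨b, hb⟩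
  refine ⟨q.map (Embedding.induce s).toHom, fun y hy => ?_⟩
  obtain ⟨y', -, rfl⟩ := List.mem_map.1 ((Walk.support_map _ _).symm ▸ hy)
  exact y'.2

lemma three_le_length_of_dist_ne_two {v x : V} (hne : v ≠ x) (hadj : ¬ G.Adj v x)
    (hd : G.dist v x ≠ 2) (w : G.Walk v x) : 3 ≤ w.length := by
  have h0 : G.dist v x ≠ 0 := fun h => hne ((w.reachable.dist_eq_zero_iff).1 h)
  have h1 : G.dist v x ≠ 1 := fun h => hadj (dist_eq_one_iff_adj.1 h)
  have := dist_le w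
  omega

namespace Walk

variable {u v w : V} {R N : Set V}

lemma isInduced_toSubgraph_append {p : G.Walk u v} {q : G.Walk v w}
    (hp : p.toSubgraph.IsInduced) (hq : q.toSubgraph.IsInduced)
    (hpq : ∀ x ∈ p.support, ∀ y ∈ q.support, G.Adj x y → x = v ∨ y = v) :
    (p.append q).toSubgraph.IsInduced := by
  have mixed : ∀ x ∈ p.support, ∀ y ∈ q.support, G.Adj x y →
      p.toSubgraph.Adj x y ∨ q.toSubgraph.Adj x y := by
    intro x hx y hy hxy
    rcases hpq x hx y hy hxy with rfl | rfl
    · exact .inr (hq (by simp) (by simpa using hy) hxy)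
    · exact .inl (hp (by simpa using hx) (by simp) hxy)
  intro x hx y hy hxy
  simp only [toSubgraph_append, Subgraph.verts_sup, Set.mem_union, mem_verts_toSubgraph,
    Subgraph.sup_adj] at hx hy ⊢
  rcases hx with hx | hx <;> rcases hy with hy | hy
  · exact .inl (hp (by simpa using hx) (by simpa using hy) hxy)
  · exact mixed x hx y hy hxy
  · exact (mixed y hy x hx hxy.symm).imp (fun h => h.symm) fun h => h.symm
  · exact .inr (hq (by simpa using hx) (by simpa using hy) hxy)

structure IsShortestTo (R N : Set V) (p : G.Walk u v) : Prop where
  end_mem : v ∈ N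
  support_subset : ∀ x ∈ p.support, x ∈ R
  length_le : ∀ (w : V) (q : G.Walk u w), w ∈ N → (∀ x ∈ q.support, x ∈ R) → p.length ≤ q.length

lemma exists_isShortestTo {w : V} (q : G.Walk u w) (hw : w ∈ N) (hq : ∀ x ∈ q.support, x ∈ R) :
    ∃ (v : V) (p : G.Walk u v), p.IsShortestTo R N := by
  classical
  have hex : ∃ n, ∃ (v : V) (p : G.Walk u v), v ∈ N ∧ (∀ x ∈ p.support, x ∈ R) ∧ p.length = n :=
    ⟨_, w, q, hw, hq, rfl⟩
  obtain ⟨v, p, hv, hp, hlen⟩ := Nat.find_spec hex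
  exact ⟨v, p, hv, hp, fun w' q' hw' hq' => hlen ▸ Nat.find_min' hex ⟨w', q', hw', hq', rfl⟩⟩

namespace IsShortestTo

variable {p : G.Walk u v}

lemma getVert_mem (hp : p.IsShortestTo R N) (i : ℕ) : p.getVert i ∈ R :=
  hp.support_subset _ (p.getVert_mem_support i)

lemma getVert_notMem (hp : p.IsShortestTo R N) {i : ℕ} (hi : i < p.length) :
    p.getVert i ∉ N := fun hN => by
  have := hp.length_le _ (p.take i) hN fun x hx => hp.support_subset x <| by
    rw [support_take] at hx
    exact List.mem_of_mem_take hx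
  simp only [take_length] at this
  omega

lemma sub_le_length (hp : p.IsShortestTo R N) {i j : ℕ} (hj : j ≤ p.length)
    (q : G.Walk (p.getVert i) (p.getVert j)) (hq : ∀ x ∈ q.support, x ∈ R) :
    j - i ≤ q.length := by
  have := hp.length_le _ ((p.take i).append (q.append (p.drop j))) hp.end_mem fun x hx => by
    simp only [mem_support_append_iff, support_take, drop_support_eq_support_drop_min] at hx
    rcases hx with hx | hx | hx
    · exact hp.support_subset x (List.mem_of_mem_take hx)
    · exact hq x hx
    · exact hp.support_subset x (List.mem_of_mem_drop hx)
  simp only [length_append, take_length, drop_length] at this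
  omega

lemma isPath (hp : p.IsShortestTo R N) : p.IsPath := by
  have key : ∀ {i j : ℕ}, j ≤ p.length → p.getVert i = p.getVert j → j ≤ i := fun hj hij => by
    have := hp.sub_le_length hj (nil.copy rfl hij) (by simpa using hp.getVert_mem _)
    simp only [length_copy, length_nil] at this
    omega
  exact (IsPath.getVert_injOn_iff p).1 fun i hi j hj hij =>
    le_antisymm (key hi hij.symm) (key hj hij)

lemma isInduced (hp : p.IsShortestTo R N) : p.toSubgraph.IsInduced := by
  have key : ∀ {i j : ℕ}, i < j → j ≤ p.length → G.Adj (p.getVert i) (p.getVert j) →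
      p.toSubgraph.Adj (p.getVert i) (p.getVert j) := by
    intro i j hij hj hadj
    have := hp.sub_le_length hj hadj.toWalk (by simpa using ⟨hp.getVert_mem i, hp.getVert_mem j⟩)
    simp only [Adj.length_toWalk] at this
    obtain rfl : j = i + 1 := by omega
    exact p.toSubgraph_adj_getVert (by omega)
  intro x hx y hy hxy
  rw [mem_verts_toSubgraph, mem_support_iff_exists_getVert] at hx hy
  obtain ⟨i, rfl, hi⟩ := hx
  obtain ⟨j, rfl, hj⟩ := hy
  rcases lt_trichotomy i j with h | rfl | h
  · exact key h hj hxy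
  · exact absurd rfl hxy.ne
  · exact (key h hi hxy.symm).symm

lemma notMem_of_ne_end (hp : p.IsShortestTo R N) {y : V} (hy : y ∈ p.support) (hyv : y ≠ v) :
    y ∉ N := by
  obtain ⟨i, rfl, hi⟩ := mem_support_iff_exists_getVert.1 hy
  exact hp.getVert_notMem (lt_of_le_of_ne hi fun h => hyv (h ▸ p.getVert_length))

lemma notMem_of_neighbors_subset {K : Set V} (hp : p.IsShortestTo R N)
    (hKN : ∀ y ∈ K, ∀ x, G.Adj x y → x ∈ N) (hu : u ∉ K) {y : V} (hy : y ∈ p.support) :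
    y ∉ K := fun hyK => by
  obtain ⟨i, rfl, hi⟩ := mem_support_iff_exists_getVert.1 hy
  obtain ⟨i, rfl⟩ : ∃ i', i = i' + 1 := Nat.exists_eq_add_one.2 <|
    Nat.pos_of_ne_zero fun h => hu (by simpa [h] using hyK)
  exact hp.getVert_notMem (by omega) (hKN _ hyK _ (p.adj_getVert_succ (by omega)))

end IsShortestTo

end Walk

end SimpleGraph

namespace SimpleGraph.Lollipop

variable {V : Type*} {G : SimpleGraph V}

def IsClean (P : G.Lollipop) (c : ℕ) : Prop :=
  ∀ v ∈ P.T.support.take c, ∀ x ∈ P.C, ∀ w : G.Walk v x, 3 ≤ w.length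

lemma IsLicking.refl (P : G.Lollipop) : P.IsLicking P :=
  ⟨subset_rfl, rfl, List.prefix_refl _, fun _ hv => .inl hv⟩

lemma IsLicking.trans {P₂ P₁ P₀ : G.Lollipop} (h₂₁ : P₂.IsLicking P₁) (h₁₀ : P₁.IsLicking P₀) :
    P₂.IsLicking P₀ :=
  ⟨h₂₁.1.trans h₁₀.1, h₂₁.2.1.trans h₁₀.2.1, h₁₀.2.2.1.trans h₂₁.2.2.1,
    fun v hv => (h₂₁.2.2.2 v hv).elim (h₁₀.2.2.2 v) fun h => .inr (h₁₀.1 h)⟩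

variable {P : G.Lollipop}

lemma IsClean.lt_length {c : ℕ} (hc : P.IsClean c) : c < P.T.length := by
  by_contra! h
  have hpos := P.len_pos
  obtain ⟨x, hx, hlast⟩ := P.last_adj
  have hpen : G.Adj (P.T.getVert (P.T.length - 1)) P.last := by
    simpa [Nat.sub_add_cancel hpos] using P.T.adj_getVert_succ (i := P.T.length - 1) (by omega)
  have hmem : P.T.getVert (P.T.length - 1) ∈ P.T.support.take c := by
    rw [List.mem_take_iff_getElem]
    exact ⟨P.T.length - 1, by simp; omega, by rw [Walk.support_getElem_eq_getVert]⟩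
  simpa using hc _ hmem x hx (.cons hpen hlast.toWalk)

lemma IsClean.le_cleanliness {c : ℕ} (hc : P.IsClean c) : c ≤ P.cleanliness :=
  le_csSup ⟨P.T.length, fun _ h => (IsClean.lt_length h).le⟩ hc

lemma isClean_cleanliness : P.IsClean P.cleanliness :=
  Nat.sSup_mem (s := {c | P.IsClean c}) ⟨0, fun v hv => by simp at hv⟩
    ⟨P.T.length, fun _ h => (IsClean.lt_length h).le⟩

lemma cleanliness_lt_length : P.cleanliness < P.T.length :=
  isClean_cleanliness.lt_length

lemma cleanliness_succ_le {P' : G.Lollipop} (hL : P'.IsLicking P)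
    (hfar : ∀ x ∈ P'.C, ∀ w : G.Walk (P.T.getVert P.cleanliness) x, 3 ≤ w.length) :
    P.cleanliness + 1 ≤ P'.cleanliness := by
  have hlt : P.cleanliness < P.T.length := cleanliness_lt_length
  have htake : P'.T.support.take (P.cleanliness + 1) = P.T.support.take (P.cleanliness + 1) := by
    obtain ⟨l, hl⟩ := hL.2.2.1
    rw [← hl, List.take_append_of_le_length (by simp; omega)]
  refine IsClean.le_cleanliness fun v hv x hx w => ?_
  rw [htake, List.take_add_one, ← Walk.getVert_eq_support_getElem? _ hlt.le] at hv
  rcases List.mem_append.1 hv with hv | hv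
  · exact isClean_cleanliness v hv x (hL.1 hx) w
  · obtain rfl : v = _ := by simpa using hv
    exact hfar x hx w

lemma exists_isShortestTo_neighbor {K : Set V} (hKC : K ⊆ P.C) (hK : K.Nonempty) :
    ∃ (z : V) (p : G.Walk P.last z),
      p.IsShortestTo (insert P.last P.C) {y | ∃ x ∈ K, G.Adj y x} := by
  obtain ⟨c₀, hc₀, hlast⟩ := P.last_adj
  obtain ⟨k₀, hk₀⟩ := hK
  obtain ⟨q, hq⟩ := P.connC.exists_walk_support_subset hc₀ (hKC hk₀)
  let w := Walk.cons hlast q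
  have hw : ¬ w.Nil := Walk.not_nil_cons
  refine Walk.exists_isShortestTo w.dropLast ⟨k₀, hk₀, Walk.adj_penultimate hw⟩ fun y hy => ?_
  rw [Walk.support_dropLast hw] at hy
  rcases List.mem_cons.1 (List.dropLast_subset _ hy) with rfl | hy
  exacts [Set.mem_insert _ _, Set.mem_insert_of_mem _ (hq y hy)]

lemma exists_isLicking_of_isShortestTo {K : Set V} (hKC : K ⊆ P.C) (hK : (G.induce K).Connected)
    {z : V} {p : G.Walk P.last z}
    (hp : p.IsShortestTo (insert P.last P.C) {y | ∃ x ∈ K, G.Adj y x}) :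
    ∃ P' : G.Lollipop, P'.IsLicking P ∧ P'.C = K := by
  have hpK : ∀ y ∈ p.support, y ∉ K := fun y hy =>
    hp.notMem_of_neighbors_subset (fun y hy x hxy => ⟨y, hy, hxy⟩)
      (fun h => P.disj _ P.T.end_mem_support (hKC h)) hy
  have htail : ∀ y ∈ p.support.tail, y ∈ P.C := by
    have hnd := hp.isPath.support_nodup
    rw [← p.cons_tail_support, List.nodup_cons] at hnd
    exact fun y hy => (hp.support_subset y (List.mem_of_mem_tail hy)).resolve_left
      (by rintro rfl; exact hnd.1 hy)
  have hsupp : (P.T.append p).support = P.T.support ++ p.support.tail := Walk.support_append _ _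
  have hanti : ∀ v ∈ (P.T.append p).support, v ≠ z → ∀ x ∈ K, ¬ G.Adj v x := by
    intro v hv hvz x hx hvx
    have hvp : v ∈ p.support := by
      rcases (Walk.mem_support_append_iff _ _).1 hv with hv | hv
      · by_contra hvp
        exact P.anti v hv (by rintro rfl; exact hvp p.start_mem_support) x (hKC hx) hvx
      · exact hv
    exact hp.notMem_of_ne_end hvp hvz ⟨x, hx, hvx⟩
  refine ⟨⟨K, P.first, z, P.T.append p, ?_, ?_, ?_, ?_, hK, hp.end_mem, hanti⟩,
    ⟨hKC, rfl, ⟨_, hsupp.symm⟩, ?_⟩, rfl⟩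
  · rw [Walk.isPath_def, hsupp]
    refine P.path.support_nodup.append (hp.isPath.support_nodup.sublist (List.tail_sublist _)) ?_
    exact fun a haT hap => P.disj a haT (htail a hap)
  · refine Walk.isInduced_toSubgraph_append P.induced hp.isInduced fun x hx y hy hxy => ?_
    by_contra! hne
    exact P.anti x hx hne.1 y ((hp.support_subset y hy).resolve_left hne.2) hxy
  · simpa using P.len_pos.trans (Nat.le_add_right _ _)
  · intro v hv hvK
    rcases (Walk.mem_support_append_iff _ _).1 hv with hv | hv
    exacts [P.disj v hv (hKC hvK), hpK v hv hvK]
  · intro v hv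
    rw [hsupp, List.mem_append] at hv
    exact hv.imp id (htail v)

theorem exists_isLicking_cleanliness_succ_le [Finite V] {κ : ℕ}
    (hN2 : ∀ v : V, (G.induce {w : V | G.dist v w = 2}).chromaticNumber ≤ (κ : ℕ∞))
    (P : G.Lollipop) (hχ : (κ : ℕ∞) < (G.induce P.C).chromaticNumber) :
    ∃ P' : G.Lollipop, P'.IsLicking P ∧ P.cleanliness + 1 ≤ P'.cleanliness ∧
      (G.induce P.C).chromaticNumber - κ ≤ (G.induce P'.C).chromaticNumber := by
  set t := P.T.getVert P.cleanliness
  set C₀ := P.C \ {w | G.dist t w = 2}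
  have hC₀ : (G.induce P.C).chromaticNumber - κ ≤ (G.induce C₀).chromaticNumber :=
    tsub_le_chromaticNumber_induce_sdiff (hN2 t)
  have hC₀ne : C₀.Nonempty := by
    rw [Set.nonempty_iff_ne_empty]
    intro h
    have : (G.induce C₀).chromaticNumber = 0 := by
      rw [chromaticNumber_eq_zero_iff, h]
      infer_instance
    exact (tsub_pos_of_lt hχ).ne' (le_antisymm (this ▸ hC₀) bot_le)
  obtain ⟨K, hKC₀, hK, hχK⟩ :=
    exists_connected_induce_chromaticNumber_le (G := G) hC₀ne chromaticNumber_ne_top_of_finite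
  have hKC : K ⊆ P.C := hKC₀.trans Set.sdiff_subset
  obtain ⟨z, p, hp⟩ := P.exists_isShortestTo_neighbor hKC (Set.nonempty_coe_sort.1 hK.nonempty)
  obtain ⟨P', hL, rfl⟩ := P.exists_isLicking_of_isShortestTo hKC hK hp
  refine ⟨P', hL, cleanliness_succ_le hL fun x hx =>
    three_le_length_of_dist_ne_two ?_ ?_ (hKC₀ hx).2, hC₀.trans hχK⟩
  · rintro rfl
    exact P.disj _ (P.T.getVert_mem_support _) (hKC hx)
  · refine P.anti _ (P.T.getVert_mem_support _) ?_ x (hKC hx)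
    rw [Ne, P.path.getVert_eq_end_iff cleanliness_lt_length.le]
    exact cleanliness_lt_length.ne

end SimpleGraph.Lollipop

/-- Let `h, κ ≥ 0`, and let `G` be a graph with `χ(G[N²(v)]) ≤ κ` for every vertex `v`.
If `(C, T)` is a lollipop in `G` with `χ(G[C]) > hκ`, then there is a licking `(C', T')` of
`(C, T)` whose cleanliness is at least `h` more than that of `(C, T)`, and with
`χ(G[C']) ≥ χ(G[C]) - hκ`. -/
theorem stmt_12 {V : Type*} [Fintype V] (G : SimpleGraph V) (h κ : ℕ)
    (hN2 : ∀ v : V, (G.induce {w : V | G.dist v w = 2}).chromaticNumber ≤ (κ : ℕ∞))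
    (P : G.Lollipop)
    (hchi : ((h * κ : ℕ) : ℕ∞) < (G.induce P.C).chromaticNumber) :
    ∃ P' : G.Lollipop, P'.IsLicking P ∧
      P.cleanliness + h ≤ P'.cleanliness ∧
      (G.induce P.C).chromaticNumber - ((h * κ : ℕ) : ℕ∞) ≤
        (G.induce P'.C).chromaticNumber := by
  induction h generalizing P with
  | zero => exact ⟨P, .refl P, le_rfl, by simp⟩
  | succ h ih =>
    have hsplit : (((h + 1) * κ : ℕ) : ℕ∞) = κ + (h * κ : ℕ) := by push_cast; ring
    have hκ : (κ : ℕ∞) < (G.induce P.C).chromaticNumber :=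
      lt_of_le_of_lt (by rw [hsplit]; exact le_self_add) hchi
    obtain ⟨P₁, hL₁, hc₁, hχ₁⟩ := P.exists_isLicking_cleanliness_succ_le hN2 hκ
    obtain ⟨P', hL', hc', hχ'⟩ :=
      ih P₁ (lt_of_lt_of_le (lt_tsub_iff_left.2 (hsplit ▸ hchi)) hχ₁)
    refine ⟨P', hL'.trans hL₁, by omega, ?_⟩
    rw [hsplit, ← tsub_tsub]
    exact (tsub_le_tsub_right hχ₁ _).trans hχ'
end
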